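/- arXiv:2104.04719 — 6 statements merged into one kernel-verified Lean document; each statement's English description precedes it below -/
import Mathlib

section
/- Let V : ℝ → ℂ be an infinitely differentiable function whose support is contained in [1,2]. Then for every natural number k there exists a constant C > 0 (depending only on V and k) such that for all real K ≥ 1 and all positive real numbers n, m with n ≠ m and |n − m| ≤ m, one has |(1/K) ∫_ℝ V(v/K) · (n/m)^{iv} dv| ≤ C · (K·|n − m|/m)^{−k}. -/
open MeasureTheory Real
open scoped FourierTransform

lemma aux_decay (V : ℝ → ℂ) (hV : ContDiff ℝ (⊤ : ℕ∞) V)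
    (hsupp : Function.support V ⊆ Set.Icc 1 2) (k : ℕ) :
    ∃ B : ℝ, 0 ≤ B ∧ ∀ l : ℝ,
      |l| ^ k * ‖∫ u : ℝ, V u * Complex.exp (Complex.I * l * u)‖ ≤ B := by
  have hcs : HasCompactSupport V :=
    HasCompactSupport.intro isCompact_Icc (fun x hx => by
      by_contra h; exact hx (hsupp h))
  have hint : ∀ (j n : ℕ), (j : ℕ∞) ≤ ⊤ → (n : ℕ∞) ≤ ⊤ →
      Integrable (fun v : ℝ ↦ ‖v‖ ^ j * ‖iteratedFDeriv ℝ n V v‖) := by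
    intro j n _ _
    have hc : Continuous (fun v : ℝ ↦ ‖v‖ ^ j * ‖iteratedFDeriv ℝ n V v‖) :=
      (continuous_norm.pow j).mul (hV.continuous_iteratedFDeriv (by exact_mod_cast le_top)).norm
    have hs : HasCompactSupport (fun v : ℝ ↦ ‖v‖ ^ j * ‖iteratedFDeriv ℝ n V v‖) :=
      ((hcs.iteratedFDeriv n).norm).mul_left
    exact hc.integrable_of_hasCompactSupport hs
  set S : ℝ := ∑ p ∈ Finset.range 1 ×ˢ Finset.range (k + 1),
      ∫ v : ℝ, ‖v‖ ^ p.1 * ‖iteratedFDeriv ℝ p.2 V v‖ with hS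
  have hSnonneg : 0 ≤ S :=
    Finset.sum_nonneg fun p _ => integral_nonneg fun v => by positivity
  refine ⟨(2 * π) ^ k * 2 ^ k * S, by positivity, fun l => ?_⟩
  have key := Real.pow_mul_norm_iteratedFDeriv_fourier_le (f := V)
    (K := ⊤) (N := ⊤) (hV.of_le (by simp)) hint (k := 0) (n := k) le_top le_top (-(l / (2 * π)))
  simp only [norm_iteratedFDeriv_zero, pow_zero, one_mul, Nat.cast_zero, mul_zero,
    zero_add] at key
  have hw : ‖-(l / (2 * π))‖ = |l| / (2 * π) := by
    rw [norm_neg, Real.norm_eq_abs, abs_div, abs_of_pos (by positivity : (0:ℝ) < 2 * π)]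
  have hF : 𝓕 V (-(l / (2 * π))) = ∫ u : ℝ, V u * Complex.exp (Complex.I * l * u) := by
    rw [Real.fourier_real_eq_integral_exp_smul]
    congr 1
    ext v
    rw [smul_eq_mul, mul_comm]
    congr 1
    congr 1
    have hπ : (π : ℂ) ≠ 0 := Complex.ofReal_ne_zero.mpr Real.pi_ne_zero
    push_cast
    field_simp
  rw [hF, hw] at key
  have h1 : |l| ^ k * ‖∫ u : ℝ, V u * Complex.exp (Complex.I * l * u)‖
      = (2 * π) ^ k * ((|l| / (2 * π)) ^ k * ‖∫ u : ℝ, V u * Complex.exp (Complex.I * l * u)‖) := by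
    rw [div_pow, ← mul_assoc, mul_div_cancel₀]
    positivity
  rw [h1, mul_assoc]
  gcongr

lemma aux_log (r : ℝ) (hr : 0 < r) (hr2 : r ≤ 2) : |r - 1| ≤ 2 * |Real.log r| := by
  rcases le_or_gt 1 r with h | h
  · rw [abs_of_nonneg (by linarith), abs_of_nonneg (Real.log_nonneg h)]
    have h1 : Real.log r⁻¹ ≤ r⁻¹ - 1 := Real.log_le_sub_one_of_pos (by positivity)
    rw [Real.log_inv] at h1
    have hinv : r * r⁻¹ = 1 := mul_inv_cancel₀ hr.ne'
    nlinarith [h1, hinv, sq_nonneg (r - 1)]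
  · rw [abs_of_nonpos (by linarith), abs_of_nonpos (Real.log_neg hr h).le]
    have := Real.log_le_sub_one_of_pos hr
    linarith

/-- The conductor-lowering lemma: for a smooth bump `V` supported in `[1,2]`,
the `v`-integral `(1/K) ∫ V(v/K) (n/m)^{iv} dv` is small unless `n` and `m` are close. -/
theorem conductor_lowering (V : ℝ → ℂ) (hV : ContDiff ℝ (⊤ : ℕ∞) V)
    (hsupp : Function.support V ⊆ Set.Icc 1 2) (k : ℕ) :
    ∃ C : ℝ, 0 < C ∧ ∀ K : ℝ, 1 ≤ K → ∀ n m : ℝ, 0 < n → 0 < m → n ≠ m → |n - m| ≤ m →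
      ‖(1 / (K : ℂ)) * ∫ v : ℝ, V (v / K) *
          Complex.exp (Complex.I * v * Real.log (n / m))‖ ≤
        C * (K * |n - m| / m) ^ (-(k : ℝ)) := by
  obtain ⟨B, hB, hbound⟩ := aux_decay V hV hsupp k
  refine ⟨(B + 1) * 2 ^ k, by positivity, fun K hK n m hn hm hne hclose => ?_⟩
  have hK0 : (0 : ℝ) < K := lt_of_lt_of_le one_pos hK
  set t : ℝ := Real.log (n / m) with htdef
  have ht : t ≠ 0 := by
    have h1 : n / m ≠ 1 := fun h => hne ((div_eq_one_iff_eq hm.ne').mp h)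
    exact Real.log_ne_zero_of_pos_of_ne_one (div_pos hn hm) h1
  have hKC : (K : ℂ) ≠ 0 := Complex.ofReal_ne_zero.mpr hK0.ne'
  have step1 : (∫ v : ℝ, V (v / K) * Complex.exp (Complex.I * v * t))
      = K • ∫ u : ℝ, V u * Complex.exp (Complex.I * (K * t : ℝ) * u) := by
    have h := MeasureTheory.Measure.integral_comp_div
      (fun u : ℝ => V u * Complex.exp (Complex.I * ((K * t : ℝ) : ℂ) * u)) K
    rw [abs_of_pos hK0] at h
    rw [← h]
    congr 1
    ext v
    congr 2
    push_cast
    field_simp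
  rw [step1]
  have hz : ‖(1 / (K : ℂ)) * (K • ∫ u : ℝ, V u * Complex.exp (Complex.I * (K * t : ℝ) * u))‖
      = ‖∫ u : ℝ, V u * Complex.exp (Complex.I * (K * t : ℝ) * u)‖ := by
    rw [Complex.real_smul, ← mul_assoc, one_div, inv_mul_cancel₀ hKC, one_mul]
  rw [hz]
  set z : ℝ := ‖∫ u : ℝ, V u * Complex.exp (Complex.I * (K * t : ℝ) * u)‖ with hzdef
  have hKt : 0 < |K * t| := abs_pos.mpr (mul_ne_zero hK0.ne' ht)
  have h5 : z ≤ B / |K * t| ^ k :=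
    (le_div_iff₀ (pow_pos hKt k)).mpr (by rw [mul_comm]; exact hbound (K * t))
  set X : ℝ := K * |n - m| / m with hXdef
  have hX : 0 < X := by
    have : n - m ≠ 0 := sub_ne_zero.mpr hne
    have : 0 < |n - m| := abs_pos.mpr this
    positivity
  have hXle : X ≤ 2 * |K * t| := by
    have hr2 : n / m ≤ 2 := by
      rw [div_le_iff₀ hm]
      have : n - m ≤ m := (abs_le.mp hclose).2
      linarith
    have hlog := aux_log (n / m) (div_pos hn hm) hr2
    have habs : |n - m| / m = |n / m - 1| := by
      rw [div_sub_one hm.ne', abs_div, abs_of_pos hm]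
    rw [abs_mul, abs_of_pos hK0, hXdef, mul_div_assoc, habs]
    calc K * |n / m - 1| ≤ K * (2 * |t|) := by
          apply mul_le_mul_of_nonneg_left hlog hK0.le
      _ = 2 * (K * |t|) := by ring
  rw [Real.rpow_neg hX.le, Real.rpow_natCast]
  have h2k : (0:ℝ) < 2 ^ k := by positivity
  calc z ≤ B / |K * t| ^ k := h5
    _ = B * (|K * t| ^ k)⁻¹ := div_eq_mul_inv _ _
    _ ≤ (B + 1) * (|K * t| ^ k)⁻¹ := by gcongr; linarith
    _ = (B + 1) * 2 ^ k * (2 ^ k * |K * t| ^ k)⁻¹ := by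
        rw [mul_inv]
        field_simp
    _ ≤ (B + 1) * 2 ^ k * (X ^ k)⁻¹ := by
        apply mul_le_mul_of_nonneg_left _ (by positivity)
        apply inv_anti₀ (pow_pos hX k)
        rw [← mul_pow]
        exact pow_le_pow_left₀ hX.le hXle k
end

section
/- Let p be a prime, χ a nontrivial (hence primitive) Dirichlet character modulo p, q a positive integer with p ∤ q, a an integer with gcd(a, q) = 1, and m an integer. Then Σ_{u=0}^{pq−1} χ(u) · e(−a·u/q + m·u/(pq)) equals q · τ(χ) · χ(q) · \overline{χ}(m) if q divides m − a·p, and equals 0 otherwise. -/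
/-!
Since `-a u/q + m u/(pq) = u k/(pq)` with `k = m - a p`, writing `u = p t + s` (`s < p`, `t < q`)
splits the sum into `Σ_s χ(s) e(s k/(pq))` times the geometric sum `Σ_t e(t k/q)`, which is `q`
or `0` according as `q ∣ k`. When `k = q c`, the first factor is the twisted Gauss sum
`Σ_s χ(s) e(s c/p) = χ⁻¹(c) τ(χ)`, valid for every `c` because `χ` is primitive (`p` is prime).
Finally `χ⁻¹(c) = χ(q) χ⁻¹(m)` since `m ≡ q c (mod p)` and `q` is a unit mod `p`,
and `χ⁻¹ = \bar χ` on a finite ring.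
-/

open Finset

/-- `e(x) = exp(2πi x)`. -/
noncomputable def e (x : ℝ) : ℂ := Complex.exp (2 * Real.pi * Complex.I * x)

theorem e_add (x y : ℝ) : e (x + y) = e x * e y := by
  simp only [e, ← Complex.exp_add]
  push_cast
  ring_nf

theorem e_intCast_div (N : ℕ) [NeZero N] (j : ℤ) :
    e (j / N) = ZMod.stdAddChar (j : ZMod N) := by
  rw [ZMod.stdAddChar_coe, e]
  push_cast
  ring_nf

theorem e_natCast_mul_intCast_div (N : ℕ) [NeZero N] (s : ℕ) (j : ℤ) :
    e (s * j / N) = ZMod.stdAddChar ((s : ZMod N) * (j : ZMod N)) := by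
  simpa using e_intCast_div N (s * j)

theorem ZMod.sum_range_natCast {M : Type*} [AddCommMonoid M] (N : ℕ) [NeZero N]
    (f : ZMod N → M) :
    ∑ i ∈ range N, f i = ∑ x : ZMod N, f x :=
  sum_nbij' (↑) ZMod.val (fun _ _ ↦ mem_univ _) (fun x _ ↦ mem_range.mpr x.val_lt)
    (fun _ hi ↦ ZMod.val_cast_of_lt (mem_range.mp hi)) (fun x _ ↦ ZMod.natCast_zmod_val x)
    (fun _ _ ↦ rfl)

theorem Finset.sum_range_mul_eq_sum_sum {M : Type*} [AddCommMonoid M] (f : ℕ → M) (p q : ℕ) :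
    ∑ u ∈ range (p * q), f u = ∑ t ∈ range q, ∑ s ∈ range p, f (p * t + s) := by
  induction q with
  | zero => simp
  | succ q ih => rw [Nat.mul_succ, sum_range_add, ih, sum_range_succ]

theorem sum_range_e_mul_div (q : ℕ) [NeZero q] (k : ℤ) :
    ∑ t ∈ range q, e (t * k / q) = if (q : ℤ) ∣ k then (q : ℂ) else 0 := by
  simp_rw [e_natCast_mul_intCast_div,
    ZMod.sum_range_natCast q (fun x ↦ ZMod.stdAddChar (x * (k : ZMod q))),
    AddChar.sum_mulShift _ (ZMod.isPrimitive_stdAddChar q), ZMod.intCast_zmod_eq_zero_iff_dvd,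
    ZMod.card]
  split_ifs <;> simp

theorem sum_range_char_mul_e_eq_gaussSum_mulShift (N : ℕ) [NeZero N] (χ : MulChar (ZMod N) ℂ)
    (b : ℤ) :
    ∑ s ∈ range N, χ s * e (s * b / N) = gaussSum χ (ZMod.stdAddChar.mulShift b) := by
  simp_rw [gaussSum, AddChar.mulShift_apply, e_natCast_mul_intCast_div,
    mul_comm ((b : ℤ) : ZMod N)]
  exact ZMod.sum_range_natCast N (fun x ↦ χ x * ZMod.stdAddChar (x * (b : ZMod N)))

theorem DirichletCharacter.isPrimitive_of_prime {p : ℕ} (hp : p.Prime)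
    {χ : DirichletCharacter ℂ p} (hχ : χ ≠ 1) : χ.IsPrimitive := by
  have : NeZero p := ⟨hp.ne_zero⟩
  rw [isPrimitive_def]
  refine ((Nat.dvd_prime hp).mp χ.conductor_dvd_level).resolve_left ?_
  rwa [← eq_one_iff_conductor_eq_one]

theorem sum_range_char_mul_e_mul_div_eq_inv_mul {p : ℕ} (hp : p.Prime)
    {χ : DirichletCharacter ℂ p} (hχ : χ ≠ 1) (b : ℤ) :
    ∑ s ∈ range p, χ s * e (s * b / p) = χ⁻¹ b * ∑ s ∈ range p, χ s * e (s / p) := by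
  have : NeZero p := ⟨hp.ne_zero⟩
  have hτ := sum_range_char_mul_e_eq_gaussSum_mulShift p χ 1
  simp only [Int.cast_one, mul_one, AddChar.mulShift_one] at hτ
  rw [hτ, sum_range_char_mul_e_eq_gaussSum_mulShift,
    gaussSum_mulShift_of_isPrimitive _ (χ.isPrimitive_of_prime hp hχ)]

theorem sum_range_mul_zmod_mul_e_eq_mul (p q : ℕ) [NeZero p] (f : ZMod p → ℂ) (k : ℤ) :
    ∑ u ∈ range (p * q), f u * e (u * k / (p * q)) =
      (∑ s ∈ range p, f s * e (s * k / (p * q))) * ∑ t ∈ range q, e (t * k / q) := by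
  have hp : (p : ℝ) ≠ 0 := NeZero.ne _
  rw [sum_range_mul_eq_sum_sum, sum_mul_sum, sum_comm]
  refine sum_congr rfl fun s _ ↦ sum_congr rfl fun t _ ↦ ?_
  have hphase : ((p * t + s : ℕ) : ℝ) * k / (p * q) = s * k / (p * q) + t * k / q := by
    rw [← mul_div_mul_left (t * k : ℝ) q hp]
    push_cast
    ring
  have hf : f ((p * t + s : ℕ) : ZMod p) = f s := by simp
  rw [hf, hphase, e_add, mul_assoc]

theorem MulChar.apply_mul_inv_apply_mul {R R' : Type*} [CommMonoid R] [CommRing R']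
    (χ : MulChar R R') {x : R} (hx : IsUnit x) (y : R) : χ x * χ⁻¹ (x * y) = χ⁻¹ y := by
  rw [map_mul, ← mul_assoc, ← MulChar.mul_apply, mul_inv_cancel, MulChar.one_apply hx, one_mul]

theorem char_sum_coprime_general (p : ℕ) (hp : p.Prime) (χ : DirichletCharacter ℂ p) (hχ : χ ≠ 1)
    (q : ℕ) (hpq : ¬ p ∣ q) (a : ℤ) (m : ℤ) :
    (∑ u ∈ Finset.range (p * q), χ (u : ZMod p) *
        e (-(a : ℝ) * u / q + (m : ℝ) * u / (p * q))) =
      if (q : ℤ) ∣ (m - a * p) then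
        (q : ℂ) * (∑ u ∈ Finset.range p, χ (u : ZMod p) * e ((u : ℝ) / p)) *
          χ (q : ZMod p) * (starRingEnd ℂ) (χ ((m : ℤ) : ZMod p))
      else 0 := by
  have : Fact p.Prime := ⟨hp⟩
  have hq0 : q ≠ 0 := by rintro rfl; exact hpq (dvd_zero p)
  have : NeZero q := ⟨hq0⟩
  have hpR : (p : ℝ) ≠ 0 := by exact_mod_cast hp.ne_zero
  have hqR : (q : ℝ) ≠ 0 := by exact_mod_cast hq0
  have hphase (u : ℕ) :
      -(a : ℝ) * u / q + m * u / (p * q) = u * (m - a * p : ℤ) / (p * q) := by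
    field_simp
    push_cast
    ring
  simp_rw [hphase, sum_range_mul_zmod_mul_e_eq_mul, sum_range_e_mul_div]
  split_ifs with hk
  · obtain ⟨c, hc⟩ := hk
    have hreduce (s : ℕ) : (s : ℝ) * (m - a * p : ℤ) / (p * q) = s * c / p := by
      rw [hc]
      field_simp
      push_cast
      ring
    have hm : ((m : ℤ) : ZMod p) = q * c := by
      rw [show m = q * c + a * p by linarith]
      simp
    have hq : IsUnit (q : ZMod p) := Ne.isUnit (mt (ZMod.natCast_eq_zero_iff q p).mp hpq)
    simp_rw [hreduce, sum_range_char_mul_e_mul_div_eq_inv_mul hp hχ c, starRingEnd_apply,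
      MulChar.star_apply', hm, mul_assoc, χ.apply_mul_inv_apply_mul hq]
    ring
  · rw [mul_zero]

/-- Evaluation of the complete character sum modulo `pq` when `(p, q) = 1`:
`Σ_{u mod pq} χ(u) e(-au/q + mu/(pq))` equals `q τ(χ) χ(q) \bar{χ}(m)` if
`q ∣ m - ap`, and `0` otherwise. -/
theorem char_sum_coprime (p : ℕ) (hp : p.Prime) (χ : DirichletCharacter ℂ p) (hχ : χ ≠ 1)
    (q : ℕ) (hq : 0 < q) (hpq : ¬ p ∣ q) (a : ℤ) (ha : Int.gcd a q = 1) (m : ℤ) :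
    (∑ u ∈ Finset.range (p * q), χ (u : ZMod p) *
        e (-(a : ℝ) * u / q + (m : ℝ) * u / (p * q))) =
      if (q : ℤ) ∣ (m - a * p) then
        (q : ℂ) * (∑ u ∈ Finset.range p, χ (u : ZMod p) * e ((u : ℝ) / p)) *
          χ (q : ZMod p) * (starRingEnd ℂ) (χ ((m : ℤ) : ZMod p))
      else 0 :=
  char_sum_coprime_general p hp χ hχ q hpq a m
end

section
/- Let U : ℝ → ℂ be an infinitely differentiable function whose support is contained in [1,2]. Then there exists a constant C > 0 (depending only on U) such that for all real T ≥ 1 and all real A, one has |∫_0^∞ U(ξ) · ξ^{−iT} · e(A·ξ) dξ| ≤ C · T^{−1/2}. -/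
open MeasureTheory

noncomputable def vdcPhase (T A ξ : ℝ) : ℝ := 2 * Real.pi * A * ξ - T * Real.log ξ
noncomputable def vdcPd (T A ξ : ℝ) : ℝ := 2 * Real.pi * A - T / ξ
noncomputable def vdcG (T A ξ : ℝ) : ℂ := Complex.exp (Complex.I * (vdcPhase T A ξ : ℝ))

lemma vdc_hasDerivAt_phase (T A ξ : ℝ) (hξ : ξ ≠ 0) :
    HasDerivAt (vdcPhase T A) (vdcPd T A ξ) ξ := by
  have h1 : HasDerivAt (fun x : ℝ => 2 * Real.pi * A * x) (2 * Real.pi * A) ξ := by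
    simpa using (hasDerivAt_id ξ).const_mul (2 * Real.pi * A)
  have h2 : HasDerivAt (fun x : ℝ => T * Real.log x) (T * ξ⁻¹) ξ :=
    (Real.hasDerivAt_log hξ).const_mul T
  exact (h1.sub h2).congr_deriv (by simp [vdcPd, div_eq_mul_inv])

lemma vdc_hasDerivAt_g (T A ξ : ℝ) (hξ : ξ ≠ 0) :
    HasDerivAt (vdcG T A) (Complex.I * (vdcPd T A ξ : ℝ) * vdcG T A ξ) ξ := by
  have h1 : HasDerivAt (fun x : ℝ => Complex.I * (vdcPhase T A x : ℝ))
      (Complex.I * (vdcPd T A ξ : ℝ)) ξ :=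
    ((vdc_hasDerivAt_phase T A ξ hξ).ofReal_comp).const_mul Complex.I
  exact h1.cexp.congr_deriv (by simp only [vdcG]; ring)

lemma vdc_norm_g (T A ξ : ℝ) : ‖vdcG T A ξ‖ = 1 := by
  simp [vdcG, Complex.norm_exp]

lemma vdc_hasDerivAt_pd (T A ξ : ℝ) (hξ : ξ ≠ 0) :
    HasDerivAt (vdcPd T A) (T / ξ ^ 2) ξ := by
  have h2 : HasDerivAt (fun x : ℝ => T / x) (-(T / ξ ^ 2)) ξ := by
    simpa [div_eq_mul_inv] using ((hasDerivAt_id ξ).inv hξ).const_mul T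
  exact ((hasDerivAt_const ξ (2 * Real.pi * A)).sub h2).congr_deriv (by ring)

lemma vdc_contOn_pd (T A : ℝ) {s : Set ℝ} (hs : ∀ ξ ∈ s, ξ ≠ 0) :
    ContinuousOn (vdcPd T A) s := fun x hx =>
  ((vdc_hasDerivAt_pd T A x (hs x hx)).continuousAt).continuousWithinAt

lemma vdc_contOn_g (T A : ℝ) {s : Set ℝ} (hs : ∀ ξ ∈ s, ξ ≠ 0) :
    ContinuousOn (vdcG T A) s := fun x hx =>
  ((vdc_hasDerivAt_g T A x (hs x hx)).continuousAt).continuousWithinAt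

/-- First-derivative (monotone-phase) test for the specific phase. -/
lemma vdc_first (T A : ℝ) (hT : 0 < T) {μ c d : ℝ} (hμ : 0 < μ) (hc : 1 ≤ c)
    (hcd : c ≤ d) (ε : ℝ) (hε : ε = 1 ∨ ε = -1)
    (hp : ∀ ξ ∈ Set.Icc c d, μ ≤ ε * vdcPd T A ξ) :
    ‖∫ ξ in c..d, vdcG T A ξ‖ ≤ 3 / μ := by
  have huIcc : Set.uIcc c d = Set.Icc c d := Set.uIcc_of_le hcd
  have hne : ∀ ξ ∈ Set.Icc c d, ξ ≠ 0 := fun ξ hξ => by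
    have : (1:ℝ) ≤ ξ := le_trans hc hξ.1; linarith
  have hpne : ∀ ξ ∈ Set.Icc c d, vdcPd T A ξ ≠ 0 := by
    intro ξ hξ
    have h := hp ξ hξ
    rcases hε with h1 | h1 <;> rw [h1] at h <;> intro h0 <;> rw [h0] at h <;> simp at h <;> linarith
  have hpabs : ∀ ξ ∈ Set.Icc c d, μ ≤ |vdcPd T A ξ| := by
    intro ξ hξ
    have h := hp ξ hξ
    rcases hε with h1 | h1 <;> rw [h1] at h <;> cases abs_cases (vdcPd T A ξ) <;> linarith [abs_nonneg (vdcPd T A ξ)]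
  -- the functions
  set h : ℝ → ℂ := fun ξ => (Complex.I * (vdcPd T A ξ : ℝ))⁻¹ with hh
  set H : ℝ → ℂ := fun ξ => -(Complex.I * ((T / ξ ^ 2 : ℝ) : ℂ)) / (Complex.I * (vdcPd T A ξ : ℝ)) ^ 2 with hH
  have hIden : ∀ ξ ∈ Set.Icc c d, Complex.I * (vdcPd T A ξ : ℝ) ≠ 0 := by
    intro ξ hξ
    exact mul_ne_zero Complex.I_ne_zero (Complex.ofReal_ne_zero.2 (hpne ξ hξ))
  have hderivh : ∀ ξ ∈ Set.Icc c d, HasDerivAt h (H ξ) ξ := by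
    intro ξ hξ
    have h1 : HasDerivAt (fun x : ℝ => Complex.I * (vdcPd T A x : ℝ))
        (Complex.I * ((T / ξ ^ 2 : ℝ) : ℂ)) ξ :=
      ((vdc_hasDerivAt_pd T A ξ (hne ξ hξ)).ofReal_comp).const_mul Complex.I
    have h2 := HasDerivAt.scomp (x := ξ) (hasDerivAt_inv (hIden ξ hξ)) h1
    have : H ξ = (Complex.I * ((T / ξ ^ 2 : ℝ) : ℂ)) • (-((Complex.I * (vdcPd T A ξ : ℝ)) ^ 2)⁻¹) := by
      simp [hH, smul_eq_mul, div_eq_mul_inv]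
    rw [this]
    exact h2
  have hderivg : ∀ ξ ∈ Set.Icc c d, HasDerivAt (vdcG T A)
      (Complex.I * (vdcPd T A ξ : ℝ) * vdcG T A ξ) ξ :=
    fun ξ hξ => vdc_hasDerivAt_g T A ξ (hne ξ hξ)
  have hcontH : ContinuousOn H (Set.Icc c d) := by
    apply ContinuousOn.div
    · apply ContinuousOn.neg
      apply continuousOn_const.mul
      apply Complex.continuous_ofReal.comp_continuousOn
      exact continuousOn_const.div (continuousOn_id.pow 2)
        (fun ξ hξ => pow_ne_zero 2 (hne ξ hξ))
    · exact ((Complex.continuous_ofReal.comp_continuousOn (vdc_contOn_pd T A hne)).const_smul Complex.I).pow 2 |>.congr (fun x hx => by simp [smul_eq_mul])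
    · exact fun ξ hξ => pow_ne_zero 2 (hIden ξ hξ)
  have hintH : IntervalIntegrable H volume c d :=
    (hcontH.mono (by rw [huIcc])).intervalIntegrable
  have hcontg : ContinuousOn (vdcG T A) (Set.Icc c d) := vdc_contOn_g T A hne
  have hcontpd : ContinuousOn (vdcPd T A) (Set.Icc c d) := vdc_contOn_pd T A hne
  have hcontg' : ContinuousOn (fun ξ => Complex.I * (vdcPd T A ξ : ℝ) * vdcG T A ξ)
      (Set.Icc c d) :=
    ((continuousOn_const.mul (Complex.continuous_ofReal.comp_continuousOn hcontpd)).mul hcontg)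
  have hintg' : IntervalIntegrable (fun ξ => Complex.I * (vdcPd T A ξ : ℝ) * vdcG T A ξ)
      volume c d := (hcontg'.mono (by rw [huIcc])).intervalIntegrable
  -- integration by parts
  have parts := intervalIntegral.integral_mul_deriv_eq_deriv_mul
    (u := h) (v := vdcG T A) (u' := H)
    (v' := fun ξ => Complex.I * (vdcPd T A ξ : ℝ) * vdcG T A ξ)
    (a := c) (b := d)
    (fun x hx => hderivh x (huIcc ▸ hx)) (fun x hx => hderivg x (huIcc ▸ hx))
    hintH hintg'
  have key : ∫ ξ in c..d, vdcG T A ξ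
      = ∫ ξ in c..d, h ξ * (Complex.I * (vdcPd T A ξ : ℝ) * vdcG T A ξ) := by
    apply intervalIntegral.integral_congr
    intro ξ hξ
    rw [huIcc] at hξ
    field_simp [hh, hIden ξ hξ]
    simp only [hh]
    rw [mul_assoc, mul_assoc, inv_mul_cancel₀ (hIden ξ hξ), mul_one]
  rw [key, parts]
  -- bound the three pieces
  have hnormh : ∀ ξ ∈ Set.Icc c d, ‖h ξ‖ ≤ 1 / μ := by
    intro ξ hξ
    have : ‖h ξ‖ = |vdcPd T A ξ|⁻¹ := by
      simp [hh, map_mul]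
    rw [this, one_div]
    exact inv_anti₀ hμ (hpabs ξ hξ)
  have hcmem : c ∈ Set.Icc c d := ⟨le_refl c, hcd⟩
  have hdmem : d ∈ Set.Icc c d := ⟨hcd, le_refl d⟩
  -- the integral of the norm of H*g
  have hcontHg : ContinuousOn (fun ξ => (T / ξ ^ 2) / (vdcPd T A ξ) ^ 2) (Set.Icc c d) := by
    apply ContinuousOn.div
    · exact continuousOn_const.div (continuousOn_id.pow 2) (fun ξ hξ => pow_ne_zero 2 (hne ξ hξ))
    · exact hcontpd.pow 2
    · exact fun ξ hξ => pow_ne_zero 2 (hpne ξ hξ)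
  have hintHg : IntervalIntegrable (fun ξ => (T / ξ ^ 2) / (vdcPd T A ξ) ^ 2) volume c d :=
    (hcontHg.mono (by rw [huIcc])).intervalIntegrable
  have hnormHg : ∫ ξ in c..d, ‖H ξ * vdcG T A ξ‖ = ∫ ξ in c..d, (T / ξ ^ 2) / (vdcPd T A ξ) ^ 2 := by
    apply intervalIntegral.integral_congr
    intro ξ hξ
    rw [huIcc] at hξ
    have hξ0 : (0:ℝ) < ξ := lt_of_lt_of_le one_pos (le_trans hc hξ.1)
    have hT2 : (0:ℝ) ≤ T / ξ ^ 2 := le_of_lt (div_pos hT (by positivity))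
    show ‖H ξ * vdcG T A ξ‖ = T / ξ ^ 2 / vdcPd T A ξ ^ 2
    rw [norm_mul, vdc_norm_g, mul_one]
    simp [hH, norm_div, norm_pow, norm_mul, map_mul, Complex.norm_real, Real.norm_eq_abs,
      abs_of_nonneg hT2, sq_abs, abs_of_pos hT]
  have hftc : ∫ ξ in c..d, (T / ξ ^ 2) / (vdcPd T A ξ) ^ 2
      = (-(vdcPd T A d)⁻¹) - (-(vdcPd T A c)⁻¹) := by
    apply intervalIntegral.integral_eq_sub_of_hasDerivAt
    · intro ξ hξ
      rw [huIcc] at hξ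
      have h1 := ((vdc_hasDerivAt_pd T A ξ (hne ξ hξ)).inv (hpne ξ hξ)).neg
      exact h1.congr_deriv (by ring)
    · exact hintHg
  have habs : ∫ ξ in c..d, (T / ξ ^ 2) / (vdcPd T A ξ) ^ 2 ≤ 1 / μ := by
    rw [hftc]
    rcases hε with h1 | h1
    · have hpc : μ ≤ vdcPd T A c := by have := hp c hcmem; rw [h1] at this; linarith
      have hpd : μ ≤ vdcPd T A d := by have := hp d hdmem; rw [h1] at this; linarith
      have h2 : (vdcPd T A c)⁻¹ ≤ μ⁻¹ := inv_anti₀ hμ hpc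
      have h3 : (0:ℝ) < (vdcPd T A d)⁻¹ := inv_pos.2 (lt_of_lt_of_le hμ hpd)
      rw [one_div]; linarith
    · have hpc : vdcPd T A c ≤ -μ := by have := hp c hcmem; rw [h1] at this; linarith
      have hpd : vdcPd T A d ≤ -μ := by have := hp d hdmem; rw [h1] at this; linarith
      have h2 : (vdcPd T A c)⁻¹ < 0 := inv_lt_zero.2 (by linarith)
      have h3 : -(vdcPd T A d)⁻¹ ≤ μ⁻¹ := by
        rw [← inv_neg]
        exact inv_anti₀ hμ (by linarith)
      rw [one_div]; linarith
  have hHgbound : ‖∫ ξ in c..d, H ξ * vdcG T A ξ‖ ≤ 1 / μ := by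
    calc ‖∫ ξ in c..d, H ξ * vdcG T A ξ‖ ≤ ∫ ξ in c..d, ‖H ξ * vdcG T A ξ‖ :=
          intervalIntegral.norm_integral_le_integral_norm hcd
      _ ≤ 1 / μ := by rw [hnormHg]; exact habs
  calc ‖h d * vdcG T A d - h c * vdcG T A c - ∫ ξ in c..d, H ξ * vdcG T A ξ‖
      ≤ ‖h d * vdcG T A d - h c * vdcG T A c‖ + ‖∫ ξ in c..d, H ξ * vdcG T A ξ‖ :=
        norm_sub_le _ _
    _ ≤ (‖h d * vdcG T A d‖ + ‖h c * vdcG T A c‖) + ‖∫ ξ in c..d, H ξ * vdcG T A ξ‖ := by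
        gcongr; exact norm_sub_le _ _
    _ ≤ (1 / μ + 1 / μ) + 1 / μ := by
        have e1 : ‖h d * vdcG T A d‖ ≤ 1 / μ := by
          rw [norm_mul, vdc_norm_g, mul_one]; exact hnormh d hdmem
        have e2 : ‖h c * vdcG T A c‖ ≤ 1 / μ := by
          rw [norm_mul, vdc_norm_g, mul_one]; exact hnormh c hcmem
        exact add_le_add (add_le_add e1 e2) hHgbound
    _ = 3 / μ := by ring

/-- Van der Corput second-derivative bound for the specific phase. -/
lemma vdc_bound (T A : ℝ) (hT : 1 ≤ T) {x : ℝ} (hx : x ∈ Set.Icc (1:ℝ) 2) :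
    ‖∫ ξ in (1:ℝ)..x, vdcG T A ξ‖ ≤ 16 / Real.sqrt T := by
  obtain ⟨hx1, hx2⟩ := hx
  have hT0 : (0:ℝ) < T := lt_of_lt_of_le one_pos hT
  set μ : ℝ := Real.sqrt T / 2 with hμdef
  have hμ : 0 < μ := by
    have := Real.sqrt_pos.2 hT0
    positivity
  have hμT : μ * μ = T / 4 := by
    rw [hμdef]
    rw [div_mul_div_comm, Real.mul_self_sqrt (le_of_lt hT0)]
    norm_num
  set P : ℝ := 2 * Real.pi * A with hP
  set c : ℝ := if 0 < P + μ then min x (max 1 (T / (P + μ))) else x with hcdef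
  set d : ℝ := if 0 < P - μ then min x (max 1 (T / (P - μ))) else x with hddef
  have hc1 : 1 ≤ c := by
    rw [hcdef]
    split
    · exact le_min hx1 (le_max_left _ _)
    · exact hx1
  have hcx : c ≤ x := by
    rw [hcdef]; split
    · exact min_le_left _ _
    · exact le_refl x
  have hdx : d ≤ x := by
    rw [hddef]; split
    · exact min_le_left _ _
    · exact le_refl x
  have hd1 : 1 ≤ d := by
    rw [hddef]; split
    · exact le_min hx1 (le_max_left _ _)
    · exact hx1
  have hcd : c ≤ d := by
    rw [hcdef, hddef]
    by_cases h2 : 0 < P - μ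
    · have h1 : 0 < P + μ := by linarith
      rw [if_pos h1, if_pos h2]
      have : T / (P + μ) ≤ T / (P - μ) := by
        apply div_le_div_of_nonneg_left (le_of_lt hT0) h2; linarith
      exact min_le_min (le_refl x) (max_le_max (le_refl 1) this)
    · rw [if_neg h2]
      split
      · exact min_le_left _ _
      · exact le_refl x
  -- property (d): on [1,c], pd ≤ -μ, provided c > 1
  have hleft : 1 < c → ∀ ξ ∈ Set.Icc 1 c, μ ≤ (-1) * vdcPd T A ξ := by
    intro hc1' ξ hξ
    obtain ⟨hξ1, hξc⟩ := hξ
    have hξ0 : (0:ℝ) < ξ := lt_of_lt_of_le one_pos hξ1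
    rw [hcdef] at hc1' hξc
    by_cases h1 : 0 < P + μ
    · rw [if_pos h1] at hc1' hξc
      have hr1 : 1 < max 1 (T / (P + μ)) := lt_of_lt_of_le hc1' (min_le_right _ _)
      have hr : 1 < T / (P + μ) := by
        rcases max_choice 1 (T / (P + μ)) with h | h
        · rw [h] at hr1; exact absurd hr1 (lt_irrefl 1)
        · rw [h] at hr1; exact hr1
      have hξr : ξ ≤ T / (P + μ) := le_trans hξc (le_trans (min_le_right _ _) (by rw [max_eq_right (le_of_lt hr)]))
      have h5 : ξ * (P + μ) ≤ T := (le_div_iff₀ h1).1 hξr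
      have h6 : P + μ ≤ T / ξ := (le_div_iff₀ hξ0).2 (by linarith)
      simp only [vdcPd]
      linarith
    · rw [if_neg h1] at hξc
      push_neg at h1
      have : T / ξ > 0 := div_pos hT0 hξ0
      simp only [vdcPd]
      nlinarith
  -- property (e): on [d,x], pd ≥ μ, provided d < x
  have hright : d < x → ∀ ξ ∈ Set.Icc d x, μ ≤ (1:ℝ) * vdcPd T A ξ := by
    intro hdx' ξ hξ
    obtain ⟨hξd, hξx⟩ := hξ
    have hξ1 : (1:ℝ) ≤ ξ := le_trans hd1 hξd
    have hξ0 : (0:ℝ) < ξ := lt_of_lt_of_le one_pos hξ1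
    rw [hddef] at hdx' hξd
    by_cases h1 : 0 < P - μ
    · rw [if_pos h1] at hdx' hξd
      have hdm : min x (max 1 (T / (P - μ))) = max 1 (T / (P - μ)) := by
        rcases min_choice x (max 1 (T / (P - μ))) with h | h
        · rw [h] at hdx'; exact absurd hdx' (lt_irrefl x)
        · exact h
      rw [hdm] at hξd
      have hsξ : T / (P - μ) ≤ ξ := le_trans (le_max_right _ _) hξd
      have h5 : T ≤ ξ * (P - μ) := (div_le_iff₀ h1).1 hsξ
      have h6 : T / ξ ≤ P - μ := (div_le_iff₀ hξ0).2 (by linarith)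
      simp only [vdcPd]
      linarith
    · rw [if_neg h1] at hdx'
      exact absurd hdx' (lt_irrefl x)
  -- property (f): d - c ≤ 8 μ / T
  have hc0 : (0:ℝ) < c := lt_of_lt_of_le one_pos hc1
  have hd0 : (0:ℝ) < d := lt_of_lt_of_le one_pos hd1
  have hc2 : c ≤ 2 := le_trans (le_trans hcd hdx) hx2
  have hd2 : d ≤ 2 := le_trans hdx hx2
  have hmid : d - c ≤ 8 * μ / T := by
    rcases lt_or_ge c d with hcd' | hcd'
    · have hcx' : c < x := lt_of_lt_of_le hcd' hdx
      -- pd c ≥ -μ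
      have hpc : -μ ≤ vdcPd T A c := by
        rw [hcdef] at hcx' ⊢
        by_cases h1 : 0 < P + μ
        · rw [if_pos h1] at hcx' ⊢
          have hcm : min x (max 1 (T / (P + μ))) = max 1 (T / (P + μ)) := by
            rcases min_choice x (max 1 (T / (P + μ))) with h | h
            · rw [h] at hcx'; exact absurd hcx' (lt_irrefl x)
            · exact h
          rw [hcm]
          set cc := max 1 (T / (P + μ)) with hccdef
          have hcc0 : (0:ℝ) < cc := lt_of_lt_of_le one_pos (le_max_left _ _)
          have hrc : T / (P + μ) ≤ cc := le_max_right _ _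
          have h5 : T ≤ cc * (P + μ) := (div_le_iff₀ h1).1 hrc
          have h6 : T / cc ≤ P + μ := (div_le_iff₀ hcc0).2 (by linarith)
          simp only [vdcPd]
          linarith
        · rw [if_neg h1] at hcx'
          exact absurd hcx' (lt_irrefl x)
      -- pd d ≤ μ
      have hpd : vdcPd T A d ≤ μ := by
        by_cases h2 : 0 < P - μ
        · by_cases hds : d ≤ T / (P - μ)
          · have h5 : d * (P - μ) ≤ T := (le_div_iff₀ h2).1 hds
            have h6 : P - μ ≤ T / d := (le_div_iff₀ hd0).2 (by linarith)
            simp only [vdcPd]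
            linarith
          · push_neg at hds
            exfalso
            have hd_le : d ≤ max 1 (T / (P - μ)) := by
              rw [hddef, if_pos h2]; exact min_le_right _ _
            rcases max_choice 1 (T / (P - μ)) with h | h
            · rw [h] at hd_le
              have : d = 1 := le_antisymm hd_le hd1
              rw [this] at hcd'
              exact absurd (lt_of_le_of_lt hc1 hcd') (lt_irrefl 1)
            · rw [h] at hd_le
              exact absurd (lt_of_le_of_lt hd_le hds) (lt_irrefl d)
        · push_neg at h2
          have : (0:ℝ) < T / d := div_pos hT0 hd0
          simp only [vdcPd]
          linarith
      -- combine
      have hdiff : vdcPd T A d - vdcPd T A c ≤ 2 * μ := by linarith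
      have heq : vdcPd T A d - vdcPd T A c = T / c - T / d := by
        simp only [vdcPd]; ring
      have hu : T / c * c = T := div_mul_cancel₀ T (ne_of_gt hc0)
      have hv : T / d * d = T := div_mul_cancel₀ T (ne_of_gt hd0)
      rw [heq] at hdiff
      have key : (d - c) * T = (T / c - T / d) * (c * d) := by
        field_simp
      have h7 : (T / c - T / d) * (c * d) ≤ 2 * μ * (c * d) :=
        mul_le_mul_of_nonneg_right hdiff (by positivity)
      have h8 : c * d ≤ 4 := by nlinarith
      rw [le_div_iff₀ hT0, key]
      nlinarith [hμ]
    · have : d - c ≤ 0 := by linarith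
      have : (0:ℝ) ≤ 8 * μ / T := by positivity
      linarith
  -- integrability
  have hcont12 : ContinuousOn (vdcG T A) (Set.Icc 1 2) :=
    vdc_contOn_g T A (fun ξ hξ => ne_of_gt (lt_of_lt_of_le one_pos hξ.1))
  have hsub : ∀ a b : ℝ, 1 ≤ a → a ≤ b → b ≤ 2 →
      IntervalIntegrable (vdcG T A) volume a b := by
    intro a b ha hab hb2
    apply (hcont12.mono _).intervalIntegrable
    rw [Set.uIcc_of_le hab]
    exact Set.Icc_subset_Icc ha hb2
  have hI1c : IntervalIntegrable (vdcG T A) volume 1 c := hsub 1 c le_rfl hc1 hc2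
  have hIcd : IntervalIntegrable (vdcG T A) volume c d := hsub c d hc1 hcd hd2
  have hIdx : IntervalIntegrable (vdcG T A) volume d x := hsub d x hd1 hdx hx2
  have hI1d : IntervalIntegrable (vdcG T A) volume 1 d := hsub 1 d le_rfl hd1 hd2
  have e1 := intervalIntegral.integral_add_adjacent_intervals hI1c hIcd
  have e2 := intervalIntegral.integral_add_adjacent_intervals hI1d hIdx
  -- three bounds
  have b1 : ‖∫ ξ in (1:ℝ)..c, vdcG T A ξ‖ ≤ 3 / μ := by
    rcases eq_or_lt_of_le hc1 with h | h
    · rw [← h, intervalIntegral.integral_same]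
      simp
      positivity
    · exact vdc_first T A hT0 hμ le_rfl hc1 (-1) (Or.inr rfl) (hleft h)
  have b3 : ‖∫ ξ in d..x, vdcG T A ξ‖ ≤ 3 / μ := by
    rcases eq_or_lt_of_le hdx with h | h
    · rw [h, intervalIntegral.integral_same]
      simp
      positivity
    · exact vdc_first T A hT0 hμ hd1 hdx 1 (Or.inl rfl) (hright h)
  have b2 : ‖∫ ξ in c..d, vdcG T A ξ‖ ≤ d - c := by
    have := intervalIntegral.norm_integral_le_of_norm_le_const
      (C := 1) (f := vdcG T A) (a := c) (b := d)
      (fun ξ _ => le_of_eq (vdc_norm_g T A ξ))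
    rwa [one_mul, abs_of_nonneg (by linarith : (0:ℝ) ≤ d - c)] at this
  -- assemble
  have hs0 : 0 < Real.sqrt T := Real.sqrt_pos.2 hT0
  have hs : Real.sqrt T * Real.sqrt T = T := Real.mul_self_sqrt hT0.le
  have hsplit : ∫ ξ in (1:ℝ)..x, vdcG T A ξ
      = (∫ ξ in (1:ℝ)..c, vdcG T A ξ) + (∫ ξ in c..d, vdcG T A ξ)
        + (∫ ξ in d..x, vdcG T A ξ) := by
    rw [e1, e2]
  rw [hsplit]
  have hnum : 3 / μ + (8 * μ / T) + 3 / μ = 16 / Real.sqrt T := by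
    rw [hμdef]
    field_simp
    linear_combination 8 * hs
  calc ‖(∫ ξ in (1:ℝ)..c, vdcG T A ξ) + (∫ ξ in c..d, vdcG T A ξ)
          + (∫ ξ in d..x, vdcG T A ξ)‖
      ≤ ‖(∫ ξ in (1:ℝ)..c, vdcG T A ξ) + (∫ ξ in c..d, vdcG T A ξ)‖
        + ‖∫ ξ in d..x, vdcG T A ξ‖ := norm_add_le _ _
    _ ≤ (‖∫ ξ in (1:ℝ)..c, vdcG T A ξ‖ + ‖∫ ξ in c..d, vdcG T A ξ‖)
        + ‖∫ ξ in d..x, vdcG T A ξ‖ := by gcongr; exact norm_add_le _ _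
    _ ≤ (3 / μ + (d - c)) + 3 / μ := add_le_add (add_le_add b1 b2) b3
    _ ≤ (3 / μ + 8 * μ / T) + 3 / μ := by linarith
    _ = 16 / Real.sqrt T := by rw [← hnum]

/-- Second-derivative (van der Corput) bound for the oscillatory integral
`∫ U(ξ) ξ^{-iT} e(Aξ) dξ`: it is `O(T^{-1/2})` uniformly in `A`. -/
theorem second_derivative_bound (U : ℝ → ℂ) (hU : ContDiff ℝ (⊤ : ℕ∞) U)
    (hsupp : Function.support U ⊆ Set.Icc 1 2) :
    ∃ C : ℝ, 0 < C ∧ ∀ T : ℝ, 1 ≤ T → ∀ A : ℝ,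
      ‖∫ ξ in Set.Ioi (0 : ℝ), U ξ *
          Complex.exp (-(Complex.I * (T : ℂ)) * (Real.log ξ : ℂ)) * e (A * ξ)‖ ≤
        C * T ^ (-(1 : ℝ) / 2) := by
  have hUcont : Continuous U := hU.continuous
  have hU' : Continuous (deriv U) := hU.continuous_deriv (by simp)
  obtain ⟨M, hM⟩ := (isCompact_Icc (a := (1:ℝ)) (b := 2)).exists_bound_of_continuousOn
    hU'.continuousOn
  have hM0 : 0 ≤ M := le_trans (norm_nonneg _) (hM 1 ⟨le_refl 1, one_le_two⟩)
  -- U vanishes outside [1,2] and at the endpoints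
  have hUzero : ∀ ξ : ℝ, ξ ∉ Set.Icc (1:ℝ) 2 → U ξ = 0 := by
    intro ξ hξ
    by_contra h
    exact hξ (hsupp h)
  have hU1 : U 1 = 0 := by
    have h1 : Filter.Tendsto U (nhdsWithin (1:ℝ) (Set.Iio 1)) (nhds (U 1)) :=
      (hUcont.continuousAt).tendsto.mono_left nhdsWithin_le_nhds
    have h2 : ∀ᶠ y in nhdsWithin (1:ℝ) (Set.Iio 1), U y = 0 := by
      filter_upwards [self_mem_nhdsWithin] with y hy
      exact hUzero y (fun hmem => absurd hmem.1 (not_le.2 hy))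
    have h3 : Filter.Tendsto U (nhdsWithin (1:ℝ) (Set.Iio 1)) (nhds 0) :=
      Filter.Tendsto.congr' (Filter.EventuallyEq.symm h2) tendsto_const_nhds
    exact tendsto_nhds_unique h1 h3
  have hU2 : U 2 = 0 := by
    have h1 : Filter.Tendsto U (nhdsWithin (2:ℝ) (Set.Ioi 2)) (nhds (U 2)) :=
      (hUcont.continuousAt).tendsto.mono_left nhdsWithin_le_nhds
    have h2 : ∀ᶠ y in nhdsWithin (2:ℝ) (Set.Ioi 2), U y = 0 := by
      filter_upwards [self_mem_nhdsWithin] with y hy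
      exact hUzero y (fun hmem => absurd hmem.2 (not_le.2 hy))
    have h3 : Filter.Tendsto U (nhdsWithin (2:ℝ) (Set.Ioi 2)) (nhds 0) :=
      Filter.Tendsto.congr' (Filter.EventuallyEq.symm h2) tendsto_const_nhds
    exact tendsto_nhds_unique h1 h3
  refine ⟨16 * (M + 1), by positivity, ?_⟩
  intro T hT A
  have hT0 : (0:ℝ) < T := lt_of_lt_of_le one_pos hT
  have hs0 : 0 < Real.sqrt T := Real.sqrt_pos.2 hT0
  -- rewrite the integrand
  have hfun : ∀ ξ : ℝ, U ξ * Complex.exp (-(Complex.I * (T : ℂ)) * (Real.log ξ : ℂ))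
      * e (A * ξ) = U ξ * vdcG T A ξ := by
    intro ξ
    rw [mul_assoc]
    congr 1
    unfold e vdcG vdcPhase
    rw [← Complex.exp_add]
    congr 1
    push_cast
    ring
  have hmain : (∫ ξ in Set.Ioi (0:ℝ), U ξ *
      Complex.exp (-(Complex.I * (T : ℂ)) * (Real.log ξ : ℂ)) * e (A * ξ))
      = ∫ ξ in (1:ℝ)..2, U ξ * vdcG T A ξ := by
    simp_rw [hfun]
    rw [setIntegral_eq_integral_of_forall_compl_eq_zero
      (fun ξ hξ => by
        rw [hUzero ξ, zero_mul]
        intro hmem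
        exact hξ (lt_of_lt_of_le one_pos hmem.1)),
      ← setIntegral_eq_integral_of_forall_compl_eq_zero
      (s := Set.Icc (1:ℝ) 2) (fun ξ hξ => by rw [hUzero ξ hξ, zero_mul]),
      integral_Icc_eq_integral_Ioc, ← intervalIntegral.integral_of_le one_le_two]
  rw [hmain]
  -- integration by parts
  have hne : ∀ ξ ∈ Set.Icc (1:ℝ) 2, ξ ≠ 0 := fun ξ hξ =>
    ne_of_gt (lt_of_lt_of_le one_pos hξ.1)
  have hcontg : ContinuousOn (vdcG T A) (Set.Ioi 0) :=
    vdc_contOn_g T A (fun ξ hξ => ne_of_gt hξ)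
  have hIcc : Set.uIcc (1:ℝ) 2 = Set.Icc 1 2 := Set.uIcc_of_le one_le_two
  have hsub : ∀ a b : ℝ, 1 ≤ a → a ≤ b → b ≤ 2 →
      IntervalIntegrable (vdcG T A) volume a b := by
    intro a b ha hab hb2
    apply ContinuousOn.intervalIntegrable
    apply hcontg.mono
    rw [Set.uIcc_of_le hab]
    exact fun ξ hξ => Set.mem_Ioi.2 (lt_of_lt_of_le one_pos (le_trans ha hξ.1))
  set G : ℝ → ℂ := fun y => ∫ ξ in (1:ℝ)..y, vdcG T A ξ with hGdef
  have hGderiv : ∀ t ∈ Set.uIcc (1:ℝ) 2, HasDerivAt G (vdcG T A t) t := by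
    intro t ht
    rw [hIcc] at ht
    exact intervalIntegral.integral_hasDerivAt_right (hsub 1 t le_rfl ht.1 ht.2)
      (hcontg.stronglyMeasurableAtFilter isOpen_Ioi t (lt_of_lt_of_le one_pos ht.1))
      ((vdc_hasDerivAt_g T A t (hne t ht)).continuousAt)
  have hUderiv : ∀ t ∈ Set.uIcc (1:ℝ) 2, HasDerivAt U (deriv U t) t := fun t _ =>
    ((hU.differentiable (by simp)) t).hasDerivAt
  have hintU' : IntervalIntegrable (deriv U) volume 1 2 :=
    hU'.intervalIntegrable 1 2
  have hintg : IntervalIntegrable (vdcG T A) volume 1 2 := hsub 1 2 le_rfl one_le_two le_rfl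
  have parts := intervalIntegral.integral_mul_deriv_eq_deriv_mul
    (u := U) (v := G) (u' := deriv U) (v' := vdcG T A) (a := 1) (b := 2)
    hUderiv hGderiv hintU' hintg
  rw [parts, hU1, hU2, zero_mul, zero_mul, sub_zero, zero_sub, norm_neg]
  -- bound
  have hGbound : ∀ t ∈ Set.Icc (1:ℝ) 2, ‖G t‖ ≤ 16 / Real.sqrt T := fun t ht =>
    vdc_bound T A hT ht
  have hbound : ‖∫ ξ in (1:ℝ)..2, deriv U ξ * G ξ‖ ≤ M * (16 / Real.sqrt T) * |2 - 1| := by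
    apply intervalIntegral.norm_integral_le_of_norm_le_const
    intro ξ hξ
    rw [Set.uIoc_of_le one_le_two] at hξ
    have hmem : ξ ∈ Set.Icc (1:ℝ) 2 := ⟨le_of_lt hξ.1, hξ.2⟩
    rw [norm_mul]
    exact mul_le_mul (hM ξ hmem) (hGbound ξ hmem) (norm_nonneg _)
      (le_trans (norm_nonneg _) (hM 1 ⟨le_refl 1, one_le_two⟩))
  have hpow : T ^ (-(1:ℝ)/2) = 1 / Real.sqrt T := by
    rw [neg_div, Real.rpow_neg hT0.le, Real.sqrt_eq_rpow]; norm_num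
  rw [hpow]
  calc ‖∫ ξ in (1:ℝ)..2, deriv U ξ * G ξ‖ ≤ M * (16 / Real.sqrt T) * |2 - 1| := hbound
    _ = M * (16 / Real.sqrt T) := by norm_num
    _ ≤ (M + 1) * (16 / Real.sqrt T) := by
        apply mul_le_mul_of_nonneg_right (by linarith) (by positivity)
    _ = 16 * (M + 1) * (1 / Real.sqrt T) := by ring
end

section
/- Let U, φ : ℝ → ℂ be infinitely differentiable functions whose supports are contained in [1,2]. Then there exists a constant C > 0 (depending only on U and φ) such that for all real B and all real u with |u| ≤ 1/2, one has ∫_1^2 ∫_1^2 |U(ξ₁)| · |U(ξ₂)| · |∫_ℝ φ(w) · e(B·w·((ξ₁+u)^{1/3} − (ξ₂+u)^{1/3})) dw| dξ₁ dξ₂ ≤ C · (1 + |B|)^{−1}. -/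
open MeasureTheory Real FourierTransform
open scoped ContDiff

lemma cube_diff {a b : ℝ} (ha : 0 ≤ a) (ha' : a ≤ 5/2) (hb : 0 ≤ b) (hb' : b ≤ 5/2) :
    |a - b| ≤ 6 * |a ^ ((1:ℝ)/3) - b ^ ((1:ℝ)/3)| := by
  set x := a ^ ((1:ℝ)/3) with hxdef
  set y := b ^ ((1:ℝ)/3) with hydef
  have hx0 : 0 ≤ x := Real.rpow_nonneg ha _
  have hy0 : 0 ≤ y := Real.rpow_nonneg hb _
  have hx3 : x ^ (3:ℕ) = a := by
    rw [hxdef, ← Real.rpow_natCast (a ^ ((1:ℝ)/3)) 3, ← Real.rpow_mul ha]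
    norm_num
  have hy3 : y ^ (3:ℕ) = b := by
    rw [hydef, ← Real.rpow_natCast (b ^ ((1:ℝ)/3)) 3, ← Real.rpow_mul hb]
    norm_num
  have hx' : x ≤ 1.4 := by nlinarith [hx3, hx0, sq_nonneg x, sq_nonneg (x - 1.4), sq_nonneg (x + 1.4)]
  have hy' : y ≤ 1.4 := by nlinarith [hy3, hy0, sq_nonneg y, sq_nonneg (y - 1.4), sq_nonneg (y + 1.4)]
  have key : a - b = (x - y) * (x^2 + x*y + y^2) := by rw [← hx3, ← hy3]; ring
  have hq : |x^2 + x*y + y^2| ≤ 6 := by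
    rw [_root_.abs_of_nonneg (by positivity)]
    nlinarith
  calc |a - b| = |x - y| * |x^2 + x*y + y^2| := by rw [key, abs_mul]
    _ ≤ |x - y| * 6 := by gcongr
    _ = 6 * |x - y| := by ring

lemma fourier_decay (ψ : ℝ → ℂ) (hψ : ContDiff ℝ ∞ ψ) (hs : HasCompactSupport ψ)
    {ξ : ℝ} (hξ : ξ ≠ 0) :
    ‖𝓕 ψ ξ‖ ≤ (∫ w, ‖deriv (deriv ψ) w‖) / (4 * π^2 * ξ^2) := by
  have hd1 : ContDiff ℝ ∞ (deriv ψ) := (contDiff_infty_iff_deriv.mp hψ).2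
  have hd2 : ContDiff ℝ ∞ (deriv (deriv ψ)) := (contDiff_infty_iff_deriv.mp hd1).2
  have hs1 : HasCompactSupport (deriv ψ) := hs.deriv
  have hs2 : HasCompactSupport (deriv (deriv ψ)) := hs1.deriv
  have hint : Integrable ψ := hψ.continuous.integrable_of_hasCompactSupport hs
  have hint1 : Integrable (deriv ψ) := hd1.continuous.integrable_of_hasCompactSupport hs1
  have hint2 : Integrable (deriv (deriv ψ)) := hd2.continuous.integrable_of_hasCompactSupport hs2
  have e1 := Real.fourier_deriv hint (hψ.differentiable (by simp)) hint1
  have e2 := Real.fourier_deriv hint1 (hd1.differentiable (by simp)) hint2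
  have hnorm : ‖𝓕 (deriv (deriv ψ)) ξ‖ ≤ ∫ w, ‖deriv (deriv ψ) w‖ :=
    VectorFourier.norm_fourierIntegral_le_integral_norm _ _ _ _ _
  have hval : 𝓕 (deriv (deriv ψ)) ξ
      = (2 * ↑π * Complex.I * ↑ξ) • ((2 * ↑π * Complex.I * ↑ξ) • 𝓕 ψ ξ) := by
    rw [e2]
    simp only [e1]
  rw [hval] at hnorm
  have hn : ‖(2 * (π:ℂ) * Complex.I * (ξ:ℂ)) • ((2 * (π:ℂ) * Complex.I * (ξ:ℂ)) • 𝓕 ψ ξ)‖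
      = (4 * π^2 * ξ^2) * ‖𝓕 ψ ξ‖ := by
    rw [norm_smul, norm_smul]
    have : ‖(2 * (π:ℂ) * Complex.I * (ξ:ℂ))‖ = 2 * π * |ξ| := by
      simp only [norm_mul, Complex.norm_I, Complex.norm_real, Real.norm_eq_abs, mul_one]
      rw [_root_.abs_of_pos Real.pi_pos]
      norm_num
    rw [this]
    rw [← sq_abs ξ]
    ring
  rw [hn] at hnorm
  rw [le_div_iff₀ (by positivity)]
  linarith

lemma inner_eq (φ : ℝ → ℂ) (r : ℝ) : (∫ w : ℝ, φ w * e (r * w)) = 𝓕 φ (-r) := by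
  rw [Real.fourier_real_eq_integral_exp_smul]
  congr 1
  funext w
  rw [smul_eq_mul, mul_comm]
  unfold e
  congr 1
  push_cast
  ring_nf

lemma fourier_triv (φ : ℝ → ℂ) (r : ℝ) : ‖𝓕 φ r‖ ≤ ∫ v, ‖φ v‖ :=
  VectorFourier.norm_fourierIntegral_le_integral_norm _ _ _ _ _


set_option maxHeartbeats 1000000 in
/-- The key double-integral estimate for the bound `𝔉 ≪ t^{-1}`:
repeated integration by parts in `w` shows that the inner integral is negligible
unless `|ξ₁ - ξ₂| ≪ 1/|B|`, so the double integral is `O((1 + |B|)^{-1})`. -/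
theorem double_integral_bound (U φ : ℝ → ℂ) (hU : ContDiff ℝ (⊤ : ℕ∞) U)
    (hUsupp : Function.support U ⊆ Set.Icc 1 2) (hφ : ContDiff ℝ (⊤ : ℕ∞) φ)
    (hφsupp : Function.support φ ⊆ Set.Icc 1 2) :
    ∃ C : ℝ, 0 < C ∧ ∀ B u : ℝ, |u| ≤ 1 / 2 →
      (∫ ξ₁ in Set.Icc (1 : ℝ) 2, ∫ ξ₂ in Set.Icc (1 : ℝ) 2,
        ‖U ξ₁‖ * ‖U ξ₂‖ *
          ‖∫ w : ℝ, φ w *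
            e (B * w * ((ξ₁ + u) ^ ((1 : ℝ) / 3) - (ξ₂ + u) ^ ((1 : ℝ) / 3)))‖) ≤
        C * (1 + |B|)⁻¹ := by
  classical
  have hU' : ContDiff ℝ ∞ U := hU.of_le (by simp)
  have hφ' : ContDiff ℝ ∞ φ := hφ.of_le (by simp)
  have hUcs : HasCompactSupport U :=
    HasCompactSupport.intro isCompact_Icc (fun x hx => by
      by_contra h; exact hx (hUsupp h))
  have hφcs : HasCompactSupport φ :=
    HasCompactSupport.intro isCompact_Icc (fun x hx => by
      by_contra h; exact hx (hφsupp h))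
  obtain ⟨x₀, hx₀⟩ := (hU'.continuous.norm).exists_forall_ge_of_hasCompactSupport hUcs.norm
  obtain ⟨MU, hMUdef⟩ : ∃ MU : ℝ, MU = ‖U x₀‖ + 1 := ⟨_, rfl⟩
  have hMUpos : 0 < MU := by rw [hMUdef]; positivity
  have hMUb : ∀ x, ‖U x‖ ≤ MU := fun x => le_trans (hx₀ x) (by rw [hMUdef]; linarith)
  have hφint : Integrable φ := hφ'.continuous.integrable_of_hasCompactSupport hφcs
  obtain ⟨M0, hM0def⟩ : ∃ M0 : ℝ, M0 = (∫ w, ‖φ w‖) + 1 := ⟨_, rfl⟩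
  have hM0pos : 0 < M0 := by
    have : 0 ≤ ∫ w, ‖φ w‖ := integral_nonneg fun w => norm_nonneg _
    rw [hM0def]; linarith
  obtain ⟨M2, hM2def⟩ : ∃ M2 : ℝ, M2 = (∫ w, ‖deriv (deriv φ) w‖) + 1 := ⟨_, rfl⟩
  have hM2int : 0 ≤ ∫ w, ‖deriv (deriv φ) w‖ := integral_nonneg fun w => norm_nonneg _
  have hM2pos : 0 < M2 := by rw [hM2def]; linarith
  obtain ⟨k, hkdef⟩ : ∃ k : ℝ, k = 9 / π^2 * M2 := ⟨_, rfl⟩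
  have hkpos : 0 < k := by
    have := Real.pi_pos
    rw [hkdef]; positivity
  obtain ⟨c, hcdef⟩ : ∃ c : ℝ, c = M0 / k := ⟨_, rfl⟩
  have hcpos : 0 < c := by rw [hcdef]; exact div_pos hM0pos hkpos
  have hck : c * k = M0 := by rw [hcdef]; field_simp
  have hkM2 : k * π^2 = 9 * M2 := by
    rw [hkdef]; field_simp
  obtain ⟨sc, hscdef⟩ : ∃ sc : ℝ, sc = Real.sqrt c := ⟨_, rfl⟩
  have hscpos : 0 < sc := by rw [hscdef]; exact Real.sqrt_pos.mpr hcpos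
  have hsc2 : sc ^ 2 = c := by rw [hscdef]; exact Real.sq_sqrt hcpos.le
  have htriv : ∀ r : ℝ, ‖𝓕 φ r‖ ≤ M0 := fun r =>
    le_trans (fourier_triv φ r) (by rw [hM0def]; linarith)
  -- rewrite of the inner integral
  have hrw : ∀ (B u ξ₁ ξ₂ : ℝ),
      (∫ w : ℝ, φ w * e (B * w * ((ξ₁ + u) ^ ((1:ℝ)/3) - (ξ₂ + u) ^ ((1:ℝ)/3))))
        = 𝓕 φ (-(B * ((ξ₁ + u) ^ ((1:ℝ)/3) - (ξ₂ + u) ^ ((1:ℝ)/3)))) := by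
    intro B u ξ₁ ξ₂
    rw [← inner_eq φ (B * ((ξ₁ + u) ^ ((1:ℝ)/3) - (ξ₂ + u) ^ ((1:ℝ)/3)))]
    congr 1
    funext w
    congr 2
    ring
  -- the key pointwise bound
  have key : ∀ (B u : ℝ), |u| ≤ 1/2 → ∀ ξ₁ ∈ Set.Icc (1:ℝ) 2, ∀ ξ₂ ∈ Set.Icc (1:ℝ) 2,
      ‖∫ w : ℝ, φ w * e (B * w * ((ξ₁ + u) ^ ((1:ℝ)/3) - (ξ₂ + u) ^ ((1:ℝ)/3)))‖ ≤
        2 * M0 / (1 + c * (B * (ξ₁ - ξ₂))^2) := by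
    intro B u hu ξ₁ hξ₁ ξ₂ hξ₂
    obtain ⟨hu1, hu2⟩ := abs_le.mp hu
    obtain ⟨h11, h12⟩ := hξ₁
    obtain ⟨h21, h22⟩ := hξ₂
    set Δ : ℝ := (ξ₁ + u) ^ ((1:ℝ)/3) - (ξ₂ + u) ^ ((1:ℝ)/3) with hΔdef
    set x : ℝ := B * (ξ₁ - ξ₂) with hxdef
    have hden : (0:ℝ) < 1 + c * x^2 := by positivity
    have hcube : |ξ₁ - ξ₂| ≤ 6 * |Δ| := by
      have h := cube_diff (a := ξ₁ + u) (b := ξ₂ + u)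
        (by linarith) (by linarith) (by linarith) (by linarith)
      simpa [hΔdef] using h
    rw [hrw B u ξ₁ ξ₂]
    rcases le_or_gt (c * x^2) 1 with hcx | hcx
    · refine le_trans (htriv _) ?_
      rw [le_div_iff₀ hden]
      nlinarith [hM0pos]
    · have hxne : x ≠ 0 := by
        intro h
        rw [h] at hcx
        simp at hcx
        linarith
      have hx36 : x^2 ≤ 36 * (B * Δ)^2 := by
        have h1 : |x| ≤ |B| * (6 * |Δ|) := by
          rw [hxdef, abs_mul]
          exact mul_le_mul_of_nonneg_left hcube (abs_nonneg B)
        have h2 : |x| ≤ 6 * |B * Δ| :=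
          h1.trans (le_of_eq (by rw [abs_mul]; ring))
        calc x^2 = |x|^2 := (sq_abs x).symm
          _ ≤ (6 * |B * Δ|)^2 := by gcongr
          _ = 36 * |B * Δ|^2 := by ring
          _ = 36 * (B * Δ)^2 := by rw [sq_abs]
      have hBΔne : B * Δ ≠ 0 := by
        intro h
        rw [h] at hx36
        simp at hx36
        exact hxne (by nlinarith [sq_nonneg x])
      have hd := fourier_decay φ hφ' hφcs (ξ := -(B * Δ)) (neg_ne_zero.mpr hBΔne)
      rw [neg_sq] at hd
      refine le_trans hd ?_
      rw [div_le_div_iff₀ (by positivity) hden]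
      have hM2' : (∫ w, ‖deriv (deriv φ) w‖) ≤ M2 := by rw [hM2def]; linarith
      have h₁ : (∫ w, ‖deriv (deriv φ) w‖) * (1 + c * x^2) ≤ M2 * (1 + c * x^2) :=
        mul_le_mul_of_nonneg_right hM2' hden.le
      have h₂ : M2 * (1 + c * x^2) ≤ M2 * (2 * c * x^2) :=
        mul_le_mul_of_nonneg_left (by linarith) hM2pos.le
      have h₃ : 9 * (M2 * (2 * c * x^2)) = 2 * π^2 * M0 * x^2 := by
        linear_combination (-2*c*x^2) * hkM2 + (2*π^2*x^2) * hck
      have h₄ : 2 * π^2 * M0 * x^2 ≤ 9 * (2 * M0 * (4 * π^2 * (B * Δ)^2)) := by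
        nlinarith [mul_le_mul_of_nonneg_left hx36
          (by positivity : (0:ℝ) ≤ 2 * π^2 * M0)]
      linarith

  -- basic facts about the region
  have hvol : volume (Set.Icc (1:ℝ) 2) = 1 := by
    rw [Real.volume_Icc]; norm_num
  have hμfin : volume (Set.Icc (1:ℝ) 2) < ⊤ := by rw [hvol]; exact ENNReal.one_lt_top
  have hconst_int : ∀ r : ℝ, IntegrableOn (fun _ : ℝ => r) (Set.Icc (1:ℝ) 2) :=
    fun r => integrableOn_const hμfin.ne
  have hconst_val : ∀ r : ℝ, (∫ _ in Set.Icc (1:ℝ) 2, r) = r := by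
    intro r
    rw [setIntegral_const, measureReal_def, hvol]
    simp
  have hIb : ∀ (B u ξ₁ ξ₂ : ℝ), ‖U ξ₁‖ * ‖U ξ₂‖ * ‖∫ w : ℝ, φ w * e (B * w * ((ξ₁ + u) ^ ((1:ℝ)/3) - (ξ₂ + u) ^ ((1:ℝ)/3)))‖ ≤ MU * MU * M0 := by
    intro B u ξ₁ ξ₂
    have h3 : ‖∫ w : ℝ, φ w * e (B * w * ((ξ₁ + u) ^ ((1:ℝ)/3) - (ξ₂ + u) ^ ((1:ℝ)/3)))‖ ≤ M0 := by
      rw [hrw]; exact htriv _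
    exact mul_le_mul (mul_le_mul (hMUb ξ₁) (hMUb ξ₂) (norm_nonneg _) hMUpos.le) h3
      (norm_nonneg _) (by positivity)
  have hinner_nonneg : ∀ (B u ξ₁ : ℝ), 0 ≤ ∫ ξ₂ in Set.Icc (1:ℝ) 2, ‖U ξ₁‖ * ‖U ξ₂‖ * ‖∫ w : ℝ, φ w * e (B * w * ((ξ₁ + u) ^ ((1:ℝ)/3) - (ξ₂ + u) ^ ((1:ℝ)/3)))‖ :=
    fun B u ξ₁ => integral_nonneg fun ξ₂ => by positivity
  -- Bound 1 (valid for all B)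
  have hT1 : ∀ B u : ℝ,
      (∫ ξ₁ in Set.Icc (1:ℝ) 2, ∫ ξ₂ in Set.Icc (1:ℝ) 2, ‖U ξ₁‖ * ‖U ξ₂‖ * ‖∫ w : ℝ, φ w * e (B * w * ((ξ₁ + u) ^ ((1:ℝ)/3) - (ξ₂ + u) ^ ((1:ℝ)/3)))‖) ≤ MU * MU * M0 := by
    intro B u
    have hin : ∀ ξ₁ : ℝ, (∫ ξ₂ in Set.Icc (1:ℝ) 2, ‖U ξ₁‖ * ‖U ξ₂‖ * ‖∫ w : ℝ, φ w * e (B * w * ((ξ₁ + u) ^ ((1:ℝ)/3) - (ξ₂ + u) ^ ((1:ℝ)/3)))‖) ≤ MU * MU * M0 := fun ξ₁ =>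
      le_trans (integral_mono_of_nonneg (ae_of_all _ fun ξ₂ => by positivity)
        (hconst_int _) (ae_of_all _ fun ξ₂ => hIb B u ξ₁ ξ₂)) (le_of_eq (hconst_val _))
    exact le_trans (integral_mono_of_nonneg (ae_of_all _ fun ξ₁ => hinner_nonneg B u ξ₁)
      (hconst_int _) (ae_of_all _ hin)) (le_of_eq (hconst_val _))
  -- Bound 2 (for B ≠ 0)
  have hT2 : ∀ B u : ℝ, |u| ≤ 1/2 → B ≠ 0 →
      (∫ ξ₁ in Set.Icc (1:ℝ) 2, ∫ ξ₂ in Set.Icc (1:ℝ) 2, ‖U ξ₁‖ * ‖U ξ₂‖ * ‖∫ w : ℝ, φ w * e (B * w * ((ξ₁ + u) ^ ((1:ℝ)/3) - (ξ₂ + u) ^ ((1:ℝ)/3)))‖)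
        ≤ MU * MU * (2 * M0 * π * (sc * |B|)⁻¹) := by
    intro B u hu hB
    have hd0 : sc * B ≠ 0 := mul_ne_zero hscpos.ne' hB
    have hFint : Integrable (fun t : ℝ => 2 * M0 * (1 + (sc * B * t)^2)⁻¹) := by
      have h := (integrable_inv_one_add_sq.comp_mul_left' hd0).const_mul (2 * M0)
      simpa using h
    have hFval : (∫ t : ℝ, 2 * M0 * (1 + (sc * B * t)^2)⁻¹) = 2 * M0 * π * (sc * |B|)⁻¹ := by
      rw [MeasureTheory.integral_const_mul]
      have h := MeasureTheory.Measure.integral_comp_mul_left (fun y : ℝ => (1 + y^2)⁻¹) (sc * B)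
      rw [h, integral_univ_inv_one_add_sq, smul_eq_mul, abs_inv, abs_mul,
        _root_.abs_of_pos hscpos]
      ring
    have hin2 : ∀ ξ₁ ∈ Set.Icc (1:ℝ) 2,
        (∫ ξ₂ in Set.Icc (1:ℝ) 2, ‖U ξ₁‖ * ‖U ξ₂‖ * ‖∫ w : ℝ, φ w * e (B * w * ((ξ₁ + u) ^ ((1:ℝ)/3) - (ξ₂ + u) ^ ((1:ℝ)/3)))‖) ≤ MU * MU * (2 * M0 * π * (sc * |B|)⁻¹) := by
      intro ξ₁ hξ₁
      have h1 : Integrable (fun ξ₂ : ℝ => 2 * M0 * (1 + (sc * B * (ξ₁ - ξ₂))^2)⁻¹) := by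
        have h := hFint.comp_sub_left ξ₁
        simpa using h
      have hGint : Integrable (fun ξ₂ : ℝ => MU * MU * (2 * M0 * (1 + (sc * B * (ξ₁ - ξ₂))^2)⁻¹)) := by
        simpa using h1.const_mul (MU * MU)
      have step1 : (∫ ξ₂ in Set.Icc (1:ℝ) 2, ‖U ξ₁‖ * ‖U ξ₂‖ * ‖∫ w : ℝ, φ w * e (B * w * ((ξ₁ + u) ^ ((1:ℝ)/3) - (ξ₂ + u) ^ ((1:ℝ)/3)))‖)
          ≤ ∫ ξ₂ in Set.Icc (1:ℝ) 2, MU * MU * (2 * M0 * (1 + (sc * B * (ξ₁ - ξ₂))^2)⁻¹) := by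
        refine integral_mono_of_nonneg (ae_of_all _ fun ξ₂ => by positivity)
          hGint.integrableOn ?_
        filter_upwards [ae_restrict_mem measurableSet_Icc] with ξ₂ hξ₂
        have hk2 := key B u hu ξ₁ hξ₁ ξ₂ hξ₂
        have heq : 2 * M0 / (1 + c * (B * (ξ₁ - ξ₂))^2)
            = 2 * M0 * (1 + (sc * B * (ξ₁ - ξ₂))^2)⁻¹ := by
          rw [div_eq_mul_inv]
          congr 2
          rw [← hsc2]; ring
        calc ‖U ξ₁‖ * ‖U ξ₂‖ * ‖∫ w : ℝ, φ w * e (B * w * ((ξ₁ + u) ^ ((1:ℝ)/3) - (ξ₂ + u) ^ ((1:ℝ)/3)))‖ ≤ MU * MU * (2 * M0 / (1 + c * (B * (ξ₁ - ξ₂))^2)) :=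
              mul_le_mul (mul_le_mul (hMUb ξ₁) (hMUb ξ₂) (norm_nonneg _) hMUpos.le) hk2
                (norm_nonneg _) (by positivity)
          _ = MU * MU * (2 * M0 * (1 + (sc * B * (ξ₁ - ξ₂))^2)⁻¹) := by rw [heq]
      have step2 : (∫ ξ₂ in Set.Icc (1:ℝ) 2, MU * MU * (2 * M0 * (1 + (sc * B * (ξ₁ - ξ₂))^2)⁻¹))
          ≤ ∫ ξ₂ : ℝ, MU * MU * (2 * M0 * (1 + (sc * B * (ξ₁ - ξ₂))^2)⁻¹) :=
        setIntegral_le_integral hGint (ae_of_all _ fun ξ₂ => by positivity)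
      have step3 : (∫ ξ₂ : ℝ, MU * MU * (2 * M0 * (1 + (sc * B * (ξ₁ - ξ₂))^2)⁻¹))
          = MU * MU * (2 * M0 * π * (sc * |B|)⁻¹) := by
        rw [MeasureTheory.integral_const_mul]
        congr 1
        have h := integral_sub_left_eq_self (fun t : ℝ => 2 * M0 * (1 + (sc * B * t)^2)⁻¹) volume ξ₁
        rw [h]
        exact hFval
      exact step1.trans (step2.trans (le_of_eq step3))
    refine le_trans (integral_mono_of_nonneg (ae_of_all _ fun ξ₁ => hinner_nonneg B u ξ₁)
      (hconst_int _) ?_) (le_of_eq (hconst_val _))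
    filter_upwards [ae_restrict_mem measurableSet_Icc] with ξ₁ hξ₁
    exact hin2 ξ₁ hξ₁
  -- assemble
  refine ⟨2 * (MU * MU * M0) + 2 * (MU * MU * (2 * M0 * π / sc)) + 1, by positivity, ?_⟩
  intro B u hu
  have hABS : (0:ℝ) < 1 + |B| := by positivity
  have habs0 : (0:ℝ) ≤ |B| := abs_nonneg B
  rcases le_or_gt |B| 1 with hB1 | hB1
  · have h1 := hT1 B u
    have h2 : (2:ℝ)⁻¹ ≤ (1 + |B|)⁻¹ := by
      rw [inv_le_inv₀ (by norm_num) hABS]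
      linarith
    have h3 : (0:ℝ) ≤ 2 * (MU * MU * (2 * M0 * π / sc)) + 1 := by positivity
    calc (∫ ξ₁ in Set.Icc (1:ℝ) 2, ∫ ξ₂ in Set.Icc (1:ℝ) 2, ‖U ξ₁‖ * ‖U ξ₂‖ * ‖∫ w : ℝ, φ w * e (B * w * ((ξ₁ + u) ^ ((1:ℝ)/3) - (ξ₂ + u) ^ ((1:ℝ)/3)))‖)
        ≤ MU * MU * M0 := h1
      _ = (2 * (MU * MU * M0)) * 2⁻¹ := by ring
      _ ≤ (2 * (MU * MU * M0) + 2 * (MU * MU * (2 * M0 * π / sc)) + 1) * (1 + |B|)⁻¹ :=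
          mul_le_mul (by linarith) h2 (by norm_num) (by positivity)
  · have hBne : B ≠ 0 := by
      intro h
      rw [h] at hB1
      norm_num at hB1
    have hBpos : (0:ℝ) < |B| := by linarith
    have h1 := hT2 B u hu hBne
    have hT0 : 0 ≤ ∫ ξ₁ in Set.Icc (1:ℝ) 2, ∫ ξ₂ in Set.Icc (1:ℝ) 2, ‖U ξ₁‖ * ‖U ξ₂‖ * ‖∫ w : ℝ, φ w * e (B * w * ((ξ₁ + u) ^ ((1:ℝ)/3) - (ξ₂ + u) ^ ((1:ℝ)/3)))‖ :=
      integral_nonneg fun ξ₁ => hinner_nonneg B u ξ₁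
    rw [(div_eq_mul_inv (2 * (MU * MU * M0) + 2 * (MU * MU * (2 * M0 * π / sc)) + 1)
      (1 + |B|)).symm, le_div_iff₀ hABS]
    have hQ : MU * MU * (2 * M0 * π * (sc * |B|)⁻¹) * (1 + |B|)
        ≤ 2 * (MU * MU * (2 * M0 * π / sc)) := by
      have hinvB : (sc * |B|)⁻¹ * |B| = sc⁻¹ := by
        field_simp
      have h2 : (1 + |B|) ≤ 2 * |B| := by linarith
      calc MU * MU * (2 * M0 * π * (sc * |B|)⁻¹) * (1 + |B|)
          ≤ MU * MU * (2 * M0 * π * (sc * |B|)⁻¹) * (2 * |B|) := by gcongr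
        _ = 2 * (MU * MU * (2 * M0 * π * ((sc * |B|)⁻¹ * |B|))) := by ring
        _ = 2 * (MU * MU * (2 * M0 * π / sc)) := by rw [hinvB, div_eq_mul_inv]
    have h3 : (0:ℝ) ≤ 2 * (MU * MU * M0) + 1 := by positivity
    calc (∫ ξ₁ in Set.Icc (1:ℝ) 2, ∫ ξ₂ in Set.Icc (1:ℝ) 2, ‖U ξ₁‖ * ‖U ξ₂‖ * ‖∫ w : ℝ, φ w * e (B * w * ((ξ₁ + u) ^ ((1:ℝ)/3) - (ξ₂ + u) ^ ((1:ℝ)/3)))‖) * (1 + |B|)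
        ≤ MU * MU * (2 * M0 * π * (sc * |B|)⁻¹) * (1 + |B|) :=
          mul_le_mul_of_nonneg_right h1 hABS.le
      _ ≤ 2 * (MU * MU * (2 * M0 * π / sc)) := hQ
      _ ≤ 2 * (MU * MU * M0) + 2 * (MU * MU * (2 * M0 * π / sc)) + 1 := by linarith
end

section
/- Let U : ℝ → ℂ be an infinitely differentiable function whose support is contained in [1,2]. Then for every natural number k there exists a constant C_k > 0 (depending only on U and k) such that for all real v, all real λ₁, and all real λ₂ ≥ 1 satisfying λ₂ ≥ 10·(|v| + |λ₁|), one has |∫_ℝ U(y) · y^{iv} · e(λ₁·y + λ₂·y^{1/3}) dy| ≤ C_k · λ₂^{−k}. -/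
open MeasureTheory

namespace VTaux
open Real Set

noncomputable section

def W (v l₁ l₂ y : ℝ) : ℝ := v / y + 2*π*l₁ + (2*π/3) * l₂ * y ^ (-(2:ℝ)/3)

def W' (v l₂ y : ℝ) : ℝ := -v * y ^ (-(2:ℝ)) - (4*π/9) * l₂ * y ^ (-(5:ℝ)/3)

def ψ (v l₁ l₂ y : ℝ) : ℝ := v * Real.log y + 2*π*(l₁*y + l₂*y^((1:ℝ)/3))

def Φ (v l₁ l₂ y : ℝ) : ℂ := Complex.exp (Complex.I * (ψ v l₁ l₂ y : ℝ))

structure Trm where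
  c : ℂ
  a : ℕ
  α : ℕ
  β : ℕ
  γ : ℕ
  m : ℕ
  s : ℝ

def den (U : ℝ → ℂ) (t : Trm) (v l₁ l₂ y : ℝ) : ℂ :=
  t.c * iteratedDeriv t.a U y * (v:ℂ)^t.α * (l₁:ℂ)^t.β * (l₂:ℂ)^t.γ *
    ((y ^ t.s : ℝ) : ℂ) / ((W v l₁ l₂ y : ℝ) : ℂ) ^ t.m

def denL (U : ℝ → ℂ) (L : List Trm) (v l₁ l₂ y : ℝ) : ℂ :=
  (L.map (fun t => den U t v l₁ l₂ y)).sum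

def Tt (t : Trm) : List Trm :=
  [⟨-Complex.I * t.c, t.a+1, t.α, t.β, t.γ, t.m+1, t.s⟩,
   ⟨-Complex.I * t.c * (t.s : ℂ), t.a, t.α, t.β, t.γ, t.m+1, t.s - 1⟩,
   ⟨-Complex.I * t.c * ((t.m:ℂ)+1), t.a, t.α+1, t.β, t.γ, t.m+2, t.s - 2⟩,
   ⟨-Complex.I * t.c * ((t.m:ℂ)+1) * ((4*π/9 : ℝ):ℂ), t.a, t.α, t.β, t.γ+1, t.m+2, t.s - 5/3⟩]

def TL (L : List Trm) : List Trm := L.flatMap Tt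

variable {v l₁ l₂ y : ℝ}

lemma W_lb (hv : |v| ≤ l₂/10) (hl₁ : |l₁| ≤ l₂/10) (hl₂ : 1 ≤ l₂)
    (hy : y ∈ Icc (3/4 : ℝ) (9/4 : ℝ)) : l₂/3 ≤ W v l₁ l₂ y := by
  obtain ⟨hy1, hy2⟩ := hy
  have hy0 : (0:ℝ) < y := by linarith
  have hl₂0 : (0:ℝ) < l₂ := by linarith
  have h23 : (0:ℝ) ≤ 2/3 := by norm_num
  have hb : y ^ ((2:ℝ)/3) ≤ (1.72 : ℝ) := by
    have h1 : y ^ ((2:ℝ)/3) ≤ (9/4 : ℝ) ^ ((2:ℝ)/3) :=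
      Real.rpow_le_rpow hy0.le hy2 h23
    have h2 : ((9/4 : ℝ) ^ ((2:ℝ)/3)) ^ (3:ℕ) ≤ (1.72:ℝ) ^ (3:ℕ) := by
      rw [← Real.rpow_natCast ((9/4 : ℝ) ^ ((2:ℝ)/3)), ← Real.rpow_mul (by norm_num),
        show ((2:ℝ)/3 * (3:ℕ)) = 2 by push_cast; norm_num, Real.rpow_two]
      norm_num
    have h3 : ((9/4 : ℝ) ^ ((2:ℝ)/3)) ≤ 1.72 :=
      le_of_pow_le_pow_left₀ (by norm_num) (by norm_num) h2
    linarith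
  have hbpos : (0:ℝ) < y ^ ((2:ℝ)/3) := Real.rpow_pos_of_pos hy0 _
  have hneg : y ^ (-(2:ℝ)/3) = (y ^ ((2:ℝ)/3))⁻¹ := by
    rw [show (-(2:ℝ)/3) = -((2:ℝ)/3) by ring, Real.rpow_neg hy0.le]
  have hinv : (1.72:ℝ)⁻¹ ≤ y ^ (-(2:ℝ)/3) := by
    rw [hneg]
    exact inv_anti₀ hbpos hb
  have hvy : -(4/3) * |v| ≤ v / y := by
    have h1 : |v / y| ≤ |v| * (4/3) := by
      rw [abs_div, abs_of_pos hy0, div_le_iff₀ hy0]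
      have : |v| * (4/3) * y ≥ |v| * (4/3) * (3/4) := by
        apply mul_le_mul_of_nonneg_left hy1 (by positivity)
      calc |v| = |v| * (4/3) * (3/4) := by ring
        _ ≤ |v| * (4/3) * y := this
    have := neg_abs_le (v / y)
    nlinarith [abs_nonneg v]
  have hpi : (3.14:ℝ) ≤ π := by linarith [Real.pi_gt_d6]
  have hpi2 : π ≤ 3.15 := by linarith [Real.pi_lt_d2]
  have hterm : (2*π/3) * (1.72:ℝ)⁻¹ * l₂ ≤ (2*π/3) * l₂ * y ^ (-(2:ℝ)/3) := by
    have : (2*π/3) * l₂ * (1.72:ℝ)⁻¹ ≤ (2*π/3) * l₂ * y ^ (-(2:ℝ)/3) := by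
      apply mul_le_mul_of_nonneg_left hinv (by positivity)
    linarith [this]
  have hl1' : -(2*π) * (l₂/10) ≤ 2*π*l₁ := by
    have := neg_abs_le l₁
    nlinarith [abs_nonneg l₁]
  unfold W
  have h4 : -(4/3) * (l₂/10) ≤ v / y := by
    have : -(4/3) * |v| ≥ -(4/3) * (l₂/10) := by nlinarith
    linarith [hvy]
  nlinarith [hterm, hl1', h4, hl₂0]

lemma hasDerivAt_W (hy : 0 < y) : HasDerivAt (fun x => W v l₁ l₂ x) (W' v l₂ y) y := by
  have h1 : HasDerivAt (fun x : ℝ => v / x) (-v * y ^ (-(2:ℝ))) y := by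
    have := (hasDerivAt_inv hy.ne').const_mul v
    simp only [div_eq_mul_inv]
    refine this.congr_deriv ?_
    rw [show (-(2:ℝ)) = -((2:ℕ):ℝ) by norm_num, Real.rpow_neg hy.le, Real.rpow_natCast]
    field_simp
  have h2 : HasDerivAt (fun x : ℝ => (2*π/3) * l₂ * x ^ (-(2:ℝ)/3))
      (-(4*π/9) * l₂ * y ^ (-(5:ℝ)/3)) y := by
    have := (Real.hasDerivAt_rpow_const (p := -(2:ℝ)/3) (Or.inl hy.ne')).const_mul ((2*π/3) * l₂)
    refine this.congr_deriv ?_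
    rw [show (-(2:ℝ)/3 - 1) = -(5:ℝ)/3 by norm_num]
    ring
  have := (h1.add_const (2*π*l₁)).add h2
  refine this.congr_deriv ?_
  simp only [W']; ring

lemma hasDerivAt_ψ (hy : 0 < y) : HasDerivAt (fun x => ψ v l₁ l₂ x) (W v l₁ l₂ y) y := by
  have h1 : HasDerivAt (fun x : ℝ => v * Real.log x) (v / y) y := by
    have := (Real.hasDerivAt_log hy.ne').const_mul v
    refine this.congr_deriv ?_
    ring
  have h2 : HasDerivAt (fun x : ℝ => 2*π*(l₁*x + l₂*x^((1:ℝ)/3)))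
      (2*π*l₁ + (2*π/3) * l₂ * y ^ (-(2:ℝ)/3)) y := by
    have hc : HasDerivAt (fun x : ℝ => x ^ ((1:ℝ)/3)) ((1/3) * y ^ ((1:ℝ)/3 - 1)) y :=
      Real.hasDerivAt_rpow_const (Or.inl hy.ne')
    have := ((hasDerivAt_id y).const_mul l₁).add (hc.const_mul l₂)
    have h3 := this.const_mul (2*π)
    refine h3.congr_deriv ?_
    rw [show ((1:ℝ)/3 - 1) = -(2:ℝ)/3 by norm_num]
    ring
  have := h1.add h2
  refine this.congr_deriv ?_
  simp only [W]; ring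

lemma hasDerivAt_Φ (hy : 0 < y) :
    HasDerivAt (fun x => Φ v l₁ l₂ x) (Complex.I * (W v l₁ l₂ y : ℝ) * Φ v l₁ l₂ y) y := by
  have h1 : HasDerivAt (fun x : ℝ => ((ψ v l₁ l₂ x : ℝ) : ℂ)) ((W v l₁ l₂ y : ℝ) : ℂ) y :=
    (hasDerivAt_ψ hy).ofReal_comp
  have h2 := (h1.const_mul Complex.I).cexp
  refine h2.congr_deriv ?_
  simp only [Φ]; ring

lemma norm_Φ : ‖Φ v l₁ l₂ y‖ = 1 := by
  rw [Φ, Complex.norm_exp]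
  simp

lemma continuousOn_Φ : ContinuousOn (fun x => Φ v l₁ l₂ x) (Icc (3/4:ℝ) (9/4)) := by
  intro x hx
  have hx0 : 0 < x := by have := hx.1; linarith
  exact ((hasDerivAt_Φ hx0).continuousAt).continuousWithinAt

variable (U : ℝ → ℂ)

lemma iteratedDeriv_supp (hU : ContDiff ℝ (⊤ : ℕ∞) U) (hsupp : Function.support U ⊆ Set.Icc 1 2)
    (a : ℕ) : Function.support (iteratedDeriv a U) ⊆ Set.Icc 1 2 := by
  induction a with
  | zero => simpa using hsupp
  | succ n ih =>
      rw [iteratedDeriv_succ]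
      refine (support_deriv_subset).trans ?_
      exact closure_minimal ih isClosed_Icc

lemma den_eq_zero (hU : ContDiff ℝ (⊤ : ℕ∞) U) (hsupp : Function.support U ⊆ Set.Icc 1 2)
    (t : Trm) (hy : y ∉ Set.Icc (1:ℝ) 2) : den U t v l₁ l₂ y = 0 := by
  have : iteratedDeriv t.a U y = 0 := by
    by_contra h
    exact hy (iteratedDeriv_supp U hU hsupp t.a h)
  simp [den, this]

lemma denL_eq_zero (hU : ContDiff ℝ (⊤ : ℕ∞) U) (hsupp : Function.support U ⊆ Set.Icc 1 2)
    (L : List Trm) (hy : y ∉ Set.Icc (1:ℝ) 2) : denL U L v l₁ l₂ y = 0 := by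
  unfold denL
  rw [List.sum_eq_zero]
  intro x hx
  simp only [List.mem_map] at hx
  obtain ⟨t, _, rfl⟩ := hx
  exact den_eq_zero U hU hsupp t hy

lemma hasDerivAt_den_div (hU : ContDiff ℝ (⊤ : ℕ∞) U) (t : Trm)
    (hy : 0 < y) (hw : W v l₁ l₂ y ≠ 0) :
    HasDerivAt (fun x => den U t v l₁ l₂ x / (Complex.I * ((W v l₁ l₂ x : ℝ) : ℂ)))
      (denL U (Tt t) v l₁ l₂ y) y := by
  obtain ⟨c, a, α, β, γ, m, s⟩ := t
  set w : ℝ → ℝ := fun x => W v l₁ l₂ x with hwdef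
  have hwne : ((w y : ℝ) : ℂ) ≠ 0 := by exact_mod_cast hw
  have hwc : HasDerivAt (fun x : ℝ => ((w x : ℝ) : ℂ)) ((W' v l₂ y : ℝ) : ℂ) y :=
    (hasDerivAt_W hy).ofReal_comp
  have hu : HasDerivAt (iteratedDeriv a U) (iteratedDeriv (a+1) U y) y := by
    rw [iteratedDeriv_succ]
    exact ((hU.differentiable_iteratedDeriv a
      (by exact_mod_cast ENat.coe_lt_top a)) y).hasDerivAt
  have hrp : HasDerivAt (fun x : ℝ => ((x ^ s : ℝ) : ℂ)) ((s * y ^ (s-1) : ℝ) : ℂ) y :=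
    (Real.hasDerivAt_rpow_const (Or.inl hy.ne')).ofReal_comp
  have hz : HasDerivAt (fun x : ℝ => ((w x : ℝ) : ℂ) ^ (-((m:ℤ)+1)))
      (((-((m:ℤ)+1) : ℤ) : ℂ) * ((w y:ℝ):ℂ) ^ (-((m:ℤ)+1) - 1) * ((W' v l₂ y : ℝ):ℂ)) y := by
    have := (hasDerivAt_zpow (-((m:ℤ)+1)) ((w y : ℝ) : ℂ) (Or.inl hwne)).comp y hwc
    simpa [Function.comp_def] using this
  set K : ℂ := -Complex.I * c * (v:ℂ)^α * (l₁:ℂ)^β * (l₂:ℂ)^γ with hK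
  have hP := (((hu.mul hrp).mul hz).const_mul K)
  have hev : (fun x => den U ⟨c,a,α,β,γ,m,s⟩ v l₁ l₂ x / (Complex.I * ((W v l₁ l₂ x : ℝ) : ℂ)))
      =ᶠ[nhds y] (fun x => K * ((iteratedDeriv a U x * ((x ^ s : ℝ):ℂ)) * ((w x : ℝ):ℂ) ^ (-((m:ℤ)+1)))) := by
    have hcw : ContinuousAt w y := (hasDerivAt_W hy).continuousAt
    filter_upwards [hcw.eventually_ne hw] with x hx
    have hxc : ((w x : ℝ):ℂ) ≠ 0 := by exact_mod_cast hx
    show den U ⟨c,a,α,β,γ,m,s⟩ v l₁ l₂ x / (Complex.I * ((w x : ℝ) : ℂ)) = _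
    rw [den]
    rw [show W v l₁ l₂ x = w x from rfl]
    rw [show (-((m:ℤ)+1)) = -(((m+1 : ℕ)):ℤ) by push_cast; ring, zpow_neg, zpow_natCast]
    rw [eq_comm, hK]
    field_simp
    ring_nf
    rw [Complex.I_sq]
    ring
  apply HasDerivAt.congr_of_eventuallyEq _ hev
  refine hP.congr_deriv ?_
  have hs1 : (y : ℝ) ^ (s - 2) = y ^ s * y ^ (-(2:ℝ)) := by
    rw [← Real.rpow_add hy]; ring_nf
  have hs2 : (y : ℝ) ^ (s - 5/3) = y ^ s * y ^ (-(5:ℝ)/3) := by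
    rw [← Real.rpow_add hy]; ring_nf
  simp only [denL, Tt, List.map_cons, List.map_nil, List.sum_cons, List.sum_nil, den, Pi.mul_apply]
  rw [show (-((m:ℤ)+1) - 1) = -(((m+2:ℕ)):ℤ) by push_cast; ring,
      show (-((m:ℤ)+1)) = -(((m+1:ℕ)):ℤ) by push_cast; ring,
      zpow_neg, zpow_natCast, zpow_neg, zpow_natCast, hs1, hs2, W']
  push_cast
  simp only [pow_succ, mul_inv, div_eq_mul_inv]
  ring

lemma continuousOn_den (hU : ContDiff ℝ (⊤ : ℕ∞) U) (t : Trm)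
    (hw : ∀ x ∈ Icc (3/4:ℝ) (9/4), W v l₁ l₂ x ≠ 0) :
    ContinuousOn (fun x => den U t v l₁ l₂ x) (Icc (3/4:ℝ) (9/4)) := by
  intro x hx
  have hx0 : 0 < x := by have := hx.1; linarith
  have hwx : W v l₁ l₂ x ≠ 0 := hw x hx
  have h1 : ContinuousAt (fun x => den U t v l₁ l₂ x) x := by
    unfold den
    apply ContinuousAt.div
    · apply ContinuousAt.mul
      apply ContinuousAt.mul
      apply ContinuousAt.mul
      apply ContinuousAt.mul
      apply ContinuousAt.mul
      · exact continuousAt_const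
      · exact (hU.continuous_iteratedDeriv t.a (by exact (by exact_mod_cast le_top))).continuousAt
      · exact continuousAt_const
      · exact continuousAt_const
      · exact continuousAt_const
      · exact (Complex.continuous_ofReal.continuousAt).comp
          (Real.continuousAt_rpow_const _ _ (Or.inl hx0.ne'))
    · exact ((Complex.continuous_ofReal.continuousAt).comp
        ((hasDerivAt_W hx0).continuousAt)).pow t.m
    · exact pow_ne_zero _ (by exact_mod_cast hwx)
  exact h1.continuousWithinAt

lemma continuousOn_denL (hU : ContDiff ℝ (⊤ : ℕ∞) U) (L : List Trm)
    (hw : ∀ x ∈ Icc (3/4:ℝ) (9/4), W v l₁ l₂ x ≠ 0) :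
    ContinuousOn (fun x => denL U L v l₁ l₂ x) (Icc (3/4:ℝ) (9/4)) := by
  induction L with
  | nil => simpa [denL] using continuousOn_const
  | cons t L ih =>
      have : (fun x => denL U (t :: L) v l₁ l₂ x)
          = fun x => den U t v l₁ l₂ x + denL U L v l₁ l₂ x := by
        funext x; simp [denL]
      rw [this]
      exact (continuousOn_den U hU t hw).add ih

lemma denL_append (L₁ L₂ : List Trm) :
    denL U (L₁ ++ L₂) v l₁ l₂ y = denL U L₁ v l₁ l₂ y + denL U L₂ v l₁ l₂ y := by
  simp [denL]

/-- The integration-by-parts step. -/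
lemma ibp_step (hU : ContDiff ℝ (⊤ : ℕ∞) U) (hsupp : Function.support U ⊆ Set.Icc 1 2)
    (L : List Trm) (hv : |v| ≤ l₂/10) (hl₁ : |l₁| ≤ l₂/10) (hl₂ : 1 ≤ l₂) :
    ∫ x in (3/4:ℝ)..(9/4:ℝ), denL U L v l₁ l₂ x * Φ v l₁ l₂ x
      = - ∫ x in (3/4:ℝ)..(9/4:ℝ), denL U (TL L) v l₁ l₂ x * Φ v l₁ l₂ x := by
  have huIcc : uIcc (3/4:ℝ) (9/4:ℝ) = Icc (3/4:ℝ) (9/4:ℝ) := uIcc_of_le (by norm_num)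
  have hwne : ∀ x ∈ Icc (3/4:ℝ) (9/4:ℝ), W v l₁ l₂ x ≠ 0 := by
    intro x hx
    have := W_lb hv hl₁ hl₂ hx
    have : (0:ℝ) < W v l₁ l₂ x := by linarith
    exact this.ne'
  set A : ℝ → ℂ := fun x => denL U L v l₁ l₂ x / (Complex.I * ((W v l₁ l₂ x : ℝ) : ℂ)) with hA
  have hderivA : ∀ x ∈ Icc (3/4:ℝ) (9/4:ℝ), HasDerivAt A (denL U (TL L) v l₁ l₂ x) x := by
    intro x hx
    have hx0 : 0 < x := by have := hx.1; linarith
    clear_value A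
    subst hA
    induction L with
    | nil => simpa [denL, TL] using hasDerivAt_const x (0:ℂ)
    | cons t L ih =>
        have heq : (fun x => denL U (t :: L) v l₁ l₂ x / (Complex.I * ((W v l₁ l₂ x : ℝ) : ℂ)))
            = fun x => den U t v l₁ l₂ x / (Complex.I * ((W v l₁ l₂ x : ℝ) : ℂ))
               + denL U L v l₁ l₂ x / (Complex.I * ((W v l₁ l₂ x : ℝ) : ℂ)) := by
          funext z; simp [denL, add_div]
        rw [heq, show TL (t :: L) = Tt t ++ TL L from rfl]
        have := (hasDerivAt_den_div U hU t hx0 (hwne x hx)).add ih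
        rw [denL_append]; exact this
  have hderivH : ∀ x ∈ uIcc (3/4:ℝ) (9/4:ℝ), HasDerivAt (fun z => A z * Φ v l₁ l₂ z)
      (denL U (TL L) v l₁ l₂ x * Φ v l₁ l₂ x + denL U L v l₁ l₂ x * Φ v l₁ l₂ x) x := by
    intro x hx
    rw [huIcc] at hx
    have hx0 : 0 < x := by have := hx.1; linarith
    have h := (hderivA x hx).mul (hasDerivAt_Φ (v := v) (l₁ := l₁) (l₂ := l₂) hx0)
    have h2 : A x * (Complex.I * ((W v l₁ l₂ x : ℝ):ℂ) * Φ v l₁ l₂ x)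
        = denL U L v l₁ l₂ x * Φ v l₁ l₂ x := by
      rw [hA]
      have hIw : Complex.I * ((W v l₁ l₂ x : ℝ):ℂ) ≠ 0 := by
        apply mul_ne_zero Complex.I_ne_zero
        exact_mod_cast hwne x hx
      have hW' : ((W v l₁ l₂ x : ℝ):ℂ) ≠ 0 := by exact_mod_cast hwne x hx
      field_simp
    rw [h2] at h
    exact h
  have hcont1 : ContinuousOn (fun x => denL U (TL L) v l₁ l₂ x * Φ v l₁ l₂ x)
      (Icc (3/4:ℝ) (9/4:ℝ)) := (continuousOn_denL U hU (TL L) hwne).mul continuousOn_Φ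
  have hcont2 : ContinuousOn (fun x => denL U L v l₁ l₂ x * Φ v l₁ l₂ x)
      (Icc (3/4:ℝ) (9/4:ℝ)) := (continuousOn_denL U hU L hwne).mul continuousOn_Φ
  have hint1 : IntervalIntegrable (fun x => denL U (TL L) v l₁ l₂ x * Φ v l₁ l₂ x)
      volume (3/4:ℝ) (9/4:ℝ) := (hcont1.mono (by rw [huIcc])).intervalIntegrable
  have hint2 : IntervalIntegrable (fun x => denL U L v l₁ l₂ x * Φ v l₁ l₂ x)
      volume (3/4:ℝ) (9/4:ℝ) := (hcont2.mono (by rw [huIcc])).intervalIntegrable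
  have key := intervalIntegral.integral_eq_sub_of_hasDerivAt hderivH (hint1.add hint2)
  have hAe : A (9/4:ℝ) * Φ v l₁ l₂ (9/4:ℝ) - A (3/4:ℝ) * Φ v l₁ l₂ (3/4:ℝ) = 0 := by
    have h94 : denL U L v l₁ l₂ (9/4:ℝ) = 0 :=
      denL_eq_zero U hU hsupp L (by intro h; have := h.2; norm_num at this)
    have h34 : denL U L v l₁ l₂ (3/4:ℝ) = 0 :=
      denL_eq_zero U hU hsupp L (by intro h; have := h.1; norm_num at this)
    simp [hA, h94, h34]
  rw [hAe, intervalIntegral.integral_add hint1 hint2] at key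
  linear_combination key

/-- bound for a single term -/
lemma norm_den_le (hU : ContDiff ℝ (⊤ : ℕ∞) U) (hsupp : Function.support U ⊆ Set.Icc 1 2)
    (t : Trm) (k : ℕ) (hk : (k:ℤ) ≤ (t.m : ℤ) - t.α - t.β - t.γ) :
    ∃ C : ℝ, 0 < C ∧ ∀ v l₁ l₂ y : ℝ, |v| ≤ l₂/10 → |l₁| ≤ l₂/10 → 1 ≤ l₂ →
      y ∈ Icc (3/4:ℝ) (9/4:ℝ) →
      ‖den U t v l₁ l₂ y‖ ≤ C * l₂ ^ (-(k:ℝ)) := by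
  have hcsU : HasCompactSupport U := HasCompactSupport.intro isCompact_Icc
    (fun x hx => by by_contra h; exact hx (hsupp h))
  have hcs : HasCompactSupport (iteratedDeriv t.a U) := by
    have : Function.support (iteratedDeriv t.a U) ⊆ Set.Icc 1 2 :=
      iteratedDeriv_supp U hU hsupp t.a
    exact HasCompactSupport.intro isCompact_Icc
      (fun x hx => by by_contra h; exact hx (this h))
  obtain ⟨M, hM⟩ := hcs.exists_bound_of_continuous
    (hU.continuous_iteratedDeriv t.a (by exact (by exact_mod_cast le_top)))
  have hM0 : 0 ≤ M := le_trans (norm_nonneg _) (hM 0)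
  refine ⟨(‖t.c‖ + 1) * (M + 1) * 3 ^ |t.s| * 3 ^ t.m, by positivity, ?_⟩
  intro v l₁ l₂ y hv hl₁ hl₂ hy
  have hl₂0 : (0:ℝ) < l₂ := by linarith
  have hy0 : (0:ℝ) < y := by have := hy.1; linarith
  have hWlb := W_lb hv hl₁ hl₂ hy
  have hW0 : (0:ℝ) < W v l₁ l₂ y := by linarith
  -- norm of den
  have hnorm : ‖den U t v l₁ l₂ y‖ = ‖t.c‖ * ‖iteratedDeriv t.a U y‖ * |v|^t.α * |l₁|^t.β
      * |l₂|^t.γ * |y ^ t.s| / |W v l₁ l₂ y| ^ t.m := by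
    rw [den]
    rw [norm_div, norm_pow, norm_mul, norm_mul, norm_mul, norm_mul, norm_mul,
      norm_pow, norm_pow, norm_pow]
    simp [Complex.norm_real]
  have hys : |y ^ t.s| ≤ 3 ^ |t.s| := by
    rw [abs_of_pos (Real.rpow_pos_of_pos hy0 _)]
    rcases le_or_gt 0 t.s with hs | hs
    · calc y ^ t.s ≤ (3:ℝ) ^ t.s :=
            Real.rpow_le_rpow hy0.le (by have := hy.2; linarith) hs
        _ ≤ 3 ^ |t.s| := Real.rpow_le_rpow_of_exponent_le (by norm_num) (le_abs_self _)
    · calc y ^ t.s ≤ ((1:ℝ)/3) ^ t.s :=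
            Real.rpow_le_rpow_of_nonpos (by norm_num) (by have := hy.1; linarith) hs.le
        _ = 3 ^ (-t.s) := by
            rw [show ((1:ℝ)/3) = 3⁻¹ by norm_num, Real.inv_rpow (by norm_num),
              ← Real.rpow_neg (by norm_num)]
        _ ≤ 3 ^ |t.s| := Real.rpow_le_rpow_of_exponent_le (by norm_num) (neg_le_abs _)
  have hWpow : (l₂/3) ^ t.m ≤ |W v l₁ l₂ y| ^ t.m := by
    apply pow_le_pow_left₀ (by positivity)
    rw [abs_of_pos hW0]; exact hWlb
  have step1 : ‖den U t v l₁ l₂ y‖ ≤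
      (‖t.c‖ + 1) * (M + 1) * l₂^t.α * l₂^t.β * l₂^t.γ * 3 ^ |t.s| / (l₂/3) ^ t.m := by
    rw [hnorm]
    have hva : |v| ≤ l₂ := by linarith [abs_nonneg v]
    have hla : |l₁| ≤ l₂ := by linarith [abs_nonneg l₁]
    have hcc : ‖t.c‖ ≤ ‖t.c‖ + 1 := by linarith
    have hMM : ‖iteratedDeriv t.a U y‖ ≤ M + 1 := le_trans (hM y) (by linarith)
    clear hcsU
    have hvv : |v|^t.α ≤ l₂^t.α := pow_le_pow_left₀ (abs_nonneg v) hva t.α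
    have hll : |l₁|^t.β ≤ l₂^t.β := pow_le_pow_left₀ (abs_nonneg l₁) hla t.β
    have hgg : |l₂|^t.γ = l₂^t.γ := by rw [abs_of_pos hl₂0]
    rw [hgg]
    gcongr
  have step2 : (‖t.c‖ + 1) * (M + 1) * l₂^t.α * l₂^t.β * l₂^t.γ * 3 ^ |t.s| / (l₂/3) ^ t.m
      ≤ (‖t.c‖ + 1) * (M + 1) * 3 ^ |t.s| * 3 ^ t.m * l₂ ^ (-(k:ℝ)) := by
    have hzp : l₂^t.α * l₂^t.β * l₂^t.γ / (l₂/3)^t.m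
        = 3 ^ t.m * l₂ ^ ((t.α : ℤ) + t.β + t.γ - t.m) := by
      rw [div_pow, zpow_sub₀ hl₂0.ne', zpow_add₀ hl₂0.ne', zpow_add₀ hl₂0.ne']
      rw [zpow_natCast, zpow_natCast, zpow_natCast, zpow_natCast]
      field_simp
    have hexp : l₂ ^ ((t.α : ℤ) + t.β + t.γ - t.m) ≤ l₂ ^ (-(k:ℤ)) :=
      zpow_le_zpow_right₀ hl₂ (by omega)
    have hrpow : l₂ ^ (-(k:ℤ)) = l₂ ^ (-(k:ℝ)) := by
      rw [← Real.rpow_intCast l₂ (-(k:ℤ))]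
      push_cast
      ring_nf
    calc (‖t.c‖ + 1) * (M + 1) * l₂^t.α * l₂^t.β * l₂^t.γ * 3 ^ |t.s| / (l₂/3) ^ t.m
        = (‖t.c‖ + 1) * (M + 1) * 3 ^ |t.s| * (l₂^t.α * l₂^t.β * l₂^t.γ / (l₂/3)^t.m) := by
          ring
      _ = (‖t.c‖ + 1) * (M + 1) * 3 ^ |t.s| * (3 ^ t.m * l₂ ^ ((t.α : ℤ) + t.β + t.γ - t.m)) := by
          rw [hzp]
      _ ≤ (‖t.c‖ + 1) * (M + 1) * 3 ^ |t.s| * (3 ^ t.m * l₂ ^ (-(k:ℤ))) := by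
          gcongr
      _ = (‖t.c‖ + 1) * (M + 1) * 3 ^ |t.s| * 3 ^ t.m * l₂ ^ (-(k:ℝ)) := by
          rw [hrpow]; ring
  exact le_trans step1 step2

lemma norm_denL_le (hU : ContDiff ℝ (⊤ : ℕ∞) U) (hsupp : Function.support U ⊆ Set.Icc 1 2)
    (L : List Trm) (k : ℕ) (hk : ∀ t ∈ L, (k:ℤ) ≤ (t.m : ℤ) - t.α - t.β - t.γ) :
    ∃ C : ℝ, 0 < C ∧ ∀ v l₁ l₂ y : ℝ, |v| ≤ l₂/10 → |l₁| ≤ l₂/10 → 1 ≤ l₂ →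
      y ∈ Icc (3/4:ℝ) (9/4:ℝ) →
      ‖denL U L v l₁ l₂ y‖ ≤ C * l₂ ^ (-(k:ℝ)) := by
  induction L with
  | nil =>
      refine ⟨1, one_pos, ?_⟩
      intro v l₁ l₂ y hv hl₁ hl₂ hy
      have : (0:ℝ) < l₂ := by linarith
      simp [denL]
      positivity
  | cons t L ih =>
      obtain ⟨C₁, hC₁, h₁⟩ := norm_den_le U hU hsupp t k (hk t (by simp))
      obtain ⟨C₂, hC₂, h₂⟩ := ih (fun t' ht' => hk t' (by simp [ht']))
      refine ⟨C₁ + C₂, by positivity, ?_⟩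
      intro v l₁ l₂ y hv hl₁ hl₂ hy
      have : denL U (t :: L) v l₁ l₂ y = den U t v l₁ l₂ y + denL U L v l₁ l₂ y := by
        simp [denL]
      rw [this, add_mul]
      exact le_trans (norm_add_le _ _)
        (add_le_add (h₁ v l₁ l₂ y hv hl₁ hl₂ hy) (h₂ v l₁ l₂ y hv hl₁ hl₂ hy))

def L0 : List Trm := [⟨1,0,0,0,0,0,0⟩]

lemma denL_L0 : denL U L0 v l₁ l₂ y = U y := by
  simp [denL, den, L0, Real.rpow_zero]

lemma ord_TL (L : List Trm) (j : ℤ) (hL : ∀ t ∈ L, j ≤ (t.m : ℤ) - t.α - t.β - t.γ) :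
    ∀ t' ∈ TL L, j + 1 ≤ (t'.m : ℤ) - t'.α - t'.β - t'.γ := by
  intro t' ht'
  rw [TL, List.mem_flatMap] at ht'
  obtain ⟨t, htL, ht⟩ := ht'
  have := hL t htL
  simp only [Tt, List.mem_cons, List.not_mem_nil, or_false] at ht
  rcases ht with rfl | rfl | rfl | rfl <;> simp <;> push_cast <;> omega

lemma ord_iter (k : ℕ) : ∀ t ∈ (TL^[k] L0), (k:ℤ) ≤ (t.m : ℤ) - t.α - t.β - t.γ := by
  induction k with
  | zero => intro t ht; simp [L0] at ht; subst ht; simp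
  | succ n ih =>
      rw [Function.iterate_succ_apply']
      intro t ht
      have := ord_TL (TL^[n] L0) n ih t ht
      omega

end

end VTaux

open VTaux

/-- Repeated-integration-by-parts estimate used to truncate the GL(3) Voronoï
summation: if `λ₂ ≥ max(1, 10(|v| + |λ₁|))`, then the integral
`∫ U(y) y^{iv} e(λ₁ y + λ₂ y^{1/3}) dy` has arbitrary polynomial decay in `λ₂`. -/
theorem voronoi_truncation (U : ℝ → ℂ) (hU : ContDiff ℝ (⊤ : ℕ∞) U)
    (hsupp : Function.support U ⊆ Set.Icc 1 2) (k : ℕ) :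
    ∃ C : ℝ, 0 < C ∧ ∀ v l₁ l₂ : ℝ, 1 ≤ l₂ → 10 * (|v| + |l₁|) ≤ l₂ →
      ‖∫ y : ℝ, U y * Complex.exp (Complex.I * (v : ℂ) * (Real.log y : ℂ)) *
          e (l₁ * y + l₂ * y ^ ((1 : ℝ) / 3))‖ ≤ C * l₂ ^ (-(k : ℝ)) := by
  obtain ⟨C, hC, hbound⟩ := norm_denL_le U hU hsupp (TL^[k] L0) k (ord_iter k)
  refine ⟨3/2 * C, by positivity, ?_⟩
  intro v l₁ l₂ hl₂ hvl
  have hv : |v| ≤ l₂/10 := by have := abs_nonneg l₁; linarith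
  have hl₁ : |l₁| ≤ l₂/10 := by have := abs_nonneg v; linarith
  have hl₂0 : (0:ℝ) < l₂ := by linarith
  -- rewrite the integrand
  have hInt : (fun y : ℝ => U y * Complex.exp (Complex.I * (v : ℂ) * (Real.log y : ℂ)) *
      e (l₁ * y + l₂ * y ^ ((1 : ℝ) / 3))) = fun y => U y * Φ v l₁ l₂ y := by
    funext y
    rw [e, Φ, ψ, mul_assoc, ← Complex.exp_add]
    congr 1
    push_cast
    ring
  rw [hInt]
  -- move to the interval integral
  have hsuppI : Function.support (fun y => U y * Φ v l₁ l₂ y) ⊆ Set.Ioc (3/4:ℝ) (9/4:ℝ) := by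
    refine (Function.support_mul_subset_left _ _).trans (hsupp.trans ?_)
    intro x hx
    exact ⟨by linarith [hx.1], by linarith [hx.2]⟩
  rw [← intervalIntegral.integral_eq_integral_of_support_subset hsuppI]
  -- replace U by denL L0
  have hL0 : (fun x => U x * Φ v l₁ l₂ x) = fun x => denL U L0 v l₁ l₂ x * Φ v l₁ l₂ x := by
    funext x; rw [denL_L0]
  rw [hL0]
  -- iterate integration by parts
  have hiter : ∀ n : ℕ, ‖∫ x in (3/4:ℝ)..(9/4:ℝ), denL U L0 v l₁ l₂ x * Φ v l₁ l₂ x‖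
      = ‖∫ x in (3/4:ℝ)..(9/4:ℝ), denL U (TL^[n] L0) v l₁ l₂ x * Φ v l₁ l₂ x‖ := by
    intro n
    induction n with
    | zero => simp
    | succ m ih =>
        rw [ih, Function.iterate_succ_apply',
          ibp_step U hU hsupp (TL^[m] L0) hv hl₁ hl₂, norm_neg]
  rw [hiter k]
  -- final bound
  have hb : ∀ x ∈ Set.uIoc (3/4:ℝ) (9/4:ℝ),
      ‖denL U (TL^[k] L0) v l₁ l₂ x * Φ v l₁ l₂ x‖ ≤ C * l₂ ^ (-(k:ℝ)) := by
    intro x hx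
    rw [Set.uIoc_of_le (by norm_num)] at hx
    have hx' : x ∈ Set.Icc (3/4:ℝ) (9/4:ℝ) := ⟨hx.1.le, hx.2⟩
    rw [norm_mul, norm_Φ, mul_one]
    exact hbound v l₁ l₂ x hv hl₁ hl₂ hx'
  have := intervalIntegral.norm_integral_le_of_norm_le_const hb
  rw [show |(9/4:ℝ) - 3/4| = 3/2 by norm_num] at this
  calc ‖∫ x in (3/4:ℝ)..(9/4:ℝ), denL U (TL^[k] L0) v l₁ l₂ x * Φ v l₁ l₂ x‖
      ≤ C * l₂ ^ (-(k:ℝ)) * (3/2) := this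
    _ = 3/2 * C * l₂ ^ (-(k:ℝ)) := by ring
end

section
/- Let λ : ℕ × ℕ → ℂ, let ε ∈ (0, 1/3) and K₀ ≥ 1, and suppose that for every real n ≥ 1 one has Σ_{n₁,n₂ ≥ 1, n₁²n₂ ≤ n} |λ(n₂,n₁)|² / (n₁²·n₂) ≤ K₀ · n^ε. Then there exists a constant C > 0 (depending only on K₀ and ε) such that for every real α ≥ 7/6, every real N₀ ≥ 2 and every real X ≥ 2, one has Σ_{1 ≤ n₁ ≤ X} n₁^{−α} · ( Σ_{1 ≤ n₂ ≤ N₀/n₁²} |λ(n₂,n₁)|² / n₂^{2/3} )^{1/2} ≤ C · X^{ε} · N₀^{1/6 + ε}. -/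
open Finset

/-!
Split `n₁^{-α} √S(n₁) = n₁^{2/3-α} · n₁^{-2/3} √S(n₁)` and apply Cauchy–Schwarz. Since
`2α - 4/3 ≥ 1`, the first factor is bounded by the harmonic sum, hence by
`1 + log X ≤ (1 + 1/ε) X^ε`. In the second, `n₁^{-4/3} n₂^{-2/3} = (n₁²n₂)^{-2/3}` is at most
`N₀^{1/3} / (n₁²n₂)` on the range `n₁²n₂ ≤ N₀`, so the average Ramanujan bound at `N₀` gives
`K₀ N₀^{1/3+ε}`.
-/

lemma sum_Icc_floor_inv_le_one_add_log {X : ℝ} (hX : 1 ≤ X) :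
    ∑ n ∈ Icc 1 ⌊X⌋₊, (n : ℝ)⁻¹ ≤ 1 + Real.log X := by
  have hfloor_pos : (0 : ℝ) < ⌊X⌋₊ := by exact_mod_cast Nat.floor_pos.mpr hX
  calc ∑ n ∈ Icc 1 ⌊X⌋₊, (n : ℝ)⁻¹ = harmonic ⌊X⌋₊ := by
        rw [harmonic_eq_sum_Icc]; push_cast; rfl
    _ ≤ 1 + Real.log ⌊X⌋₊ := harmonic_le_one_add_log _
    _ ≤ 1 + Real.log X := by gcongr; exact Nat.floor_le (by linarith)

lemma sum_Icc_floor_rpow_sq_le {γ ε X : ℝ} (hγ : γ ≤ -1 / 2) (hε : 0 < ε) (hX : 1 ≤ X) :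
    ∑ n ∈ Icc 1 ⌊X⌋₊, ((n : ℝ) ^ γ) ^ 2 ≤ (1 + 1 / ε) * X ^ ε := by
  have hterm : ∀ n ∈ Icc 1 ⌊X⌋₊, ((n : ℝ) ^ γ) ^ 2 ≤ (n : ℝ)⁻¹ := by
    intro n hn
    have hn1 : (1 : ℝ) ≤ n := by exact_mod_cast (mem_Icc.mp hn).1
    rw [← Real.rpow_mul_natCast (by positivity), ← Real.rpow_neg_one]
    exact Real.rpow_le_rpow_of_exponent_le hn1 (by push_cast; linarith)
  have hXε : 1 ≤ X ^ ε := Real.one_le_rpow hX hε.le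
  calc ∑ n ∈ Icc 1 ⌊X⌋₊, ((n : ℝ) ^ γ) ^ 2 ≤ ∑ n ∈ Icc 1 ⌊X⌋₊, (n : ℝ)⁻¹ := sum_le_sum hterm
    _ ≤ 1 + Real.log X := sum_Icc_floor_inv_le_one_add_log hX
    _ ≤ X ^ ε + X ^ ε / ε := add_le_add hXε (Real.log_le_rpow_div (by linarith) hε)
    _ = (1 + 1 / ε) * X ^ ε := by ring

lemma rpow_neg_four_thirds_div_rpow_two_thirds_le {x y N : ℝ} (hx : 0 < x) (hy : 0 < y)
    (h : x ^ 2 * y ≤ N) : x ^ (-4 / 3 : ℝ) / y ^ (2 / 3 : ℝ) ≤ N ^ (1 / 3 : ℝ) / (x ^ 2 * y) := by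
  have hP : 0 < x ^ 2 * y := by positivity
  have hsplit : x ^ (-4 / 3 : ℝ) / y ^ (2 / 3 : ℝ) = (x ^ 2 * y) ^ (1 / 3 : ℝ) / (x ^ 2 * y) := by
    rw [← Real.rpow_sub_one hP.ne', Real.mul_rpow (by positivity) hy.le,
      ← Real.rpow_natCast x 2, ← Real.rpow_mul hx.le, div_eq_mul_inv, ← Real.rpow_neg hy.le]
    norm_num
  rw [hsplit]
  gcongr

lemma sum_Icc_floor_div_eq_sum_ite (f : ℕ → ℝ) {c : ℝ} (hc : 1 ≤ c) (N : ℝ) :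
    ∑ n ∈ Icc 1 ⌊N / c⌋₊, f n = ∑ n ∈ Icc 1 ⌊N⌋₊, if c * n ≤ N then f n else 0 := by
  rw [← sum_filter]
  congr 1
  ext n
  simp only [mem_Icc, mem_filter]
  constructor
  · rintro ⟨hn1, hn⟩
    have hcn : c * n ≤ N := by
      rwa [Nat.le_floor_iff' (by omega), le_div_iff₀ (by linarith), mul_comm] at hn
    have hn1' : (1 : ℝ) ≤ n := by exact_mod_cast hn1
    exact ⟨⟨hn1, Nat.le_floor (by nlinarith)⟩, hcn⟩
  · rintro ⟨⟨hn1, -⟩, hcn⟩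
    rw [Nat.le_floor_iff' (by omega), le_div_iff₀ (by linarith)]
    exact ⟨hn1, by linarith⟩

lemma sum_Icc_sum_Icc_floor_div_sq_le (h : ℕ → ℕ → ℝ) (hh : ∀ m n, 0 ≤ h m n) (M : ℕ) (N : ℝ) :
    ∑ m ∈ Icc 1 M, ∑ n ∈ Icc 1 ⌊N / (m : ℝ) ^ 2⌋₊, h m n ≤
      ∑ m ∈ Icc 1 ⌊N⌋₊, ∑ n ∈ Icc 1 ⌊N⌋₊, if (m : ℝ) ^ 2 * n ≤ N then h m n else 0 := by
  set F : ℕ → ℝ := fun m ↦ ∑ n ∈ Icc 1 ⌊N⌋₊, if (m : ℝ) ^ 2 * n ≤ N then h m n else 0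
  have hF : ∀ m, 0 ≤ F m := fun m ↦ sum_nonneg fun n _ ↦ by split_ifs <;> simp [hh]
  have hsupp : ∀ m ∈ Icc 1 M, F m ≠ 0 → m ∈ Icc 1 ⌊N⌋₊ := by
    intro m hm hFm
    refine mem_Icc.mpr ⟨(mem_Icc.mp hm).1,
      not_lt.mp fun hlt ↦ hFm (sum_eq_zero fun n hn ↦ if_neg ?_)⟩
    have hNm : N < m := (Nat.floor_lt' (by grind)).mp hlt
    have hm1 : (1 : ℝ) ≤ m := by exact_mod_cast (mem_Icc.mp hm).1
    have hn1 : (1 : ℝ) ≤ n := by exact_mod_cast (mem_Icc.mp hn).1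
    nlinarith
  calc ∑ m ∈ Icc 1 M, ∑ n ∈ Icc 1 ⌊N / (m : ℝ) ^ 2⌋₊, h m n = ∑ m ∈ Icc 1 M, F m :=
        sum_congr rfl fun m hm ↦ sum_Icc_floor_div_eq_sum_ite _
          (one_le_pow₀ (by exact_mod_cast (mem_Icc.mp hm).1)) N
    _ = ∑ m ∈ Icc 1 M with F m ≠ 0, F m := (sum_filter_ne_zero _).symm
    _ ≤ ∑ m ∈ Icc 1 ⌊N⌋₊, F m :=
        sum_le_sum_of_subset_of_nonneg (fun m hm ↦ (mem_filter.mp hm).elim (hsupp m))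
          fun m _ _ ↦ hF m

lemma rpow_neg_four_thirds_mul_sum_le (a : ℕ → ℝ) (ha : ∀ n, 0 ≤ a n) {m : ℕ} (hm : 1 ≤ m)
    (N : ℝ) :
    (m : ℝ) ^ (-4 / 3 : ℝ) * ∑ n ∈ Icc 1 ⌊N / (m : ℝ) ^ 2⌋₊, a n / (n : ℝ) ^ (2 / 3 : ℝ) ≤
      N ^ (1 / 3 : ℝ) * ∑ n ∈ Icc 1 ⌊N / (m : ℝ) ^ 2⌋₊, a n / ((m : ℝ) ^ 2 * n) := by
  rw [mul_sum, mul_sum]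
  refine sum_le_sum fun n hn ↦ ?_
  have hn1 : 1 ≤ n := (mem_Icc.mp hn).1
  have hmn : (m : ℝ) ^ 2 * n ≤ N := by
    rw [← le_div_iff₀' (by positivity), ← Nat.le_floor_iff' (by omega)]
    exact (mem_Icc.mp hn).2
  have key := rpow_neg_four_thirds_div_rpow_two_thirds_le (by positivity) (by positivity) hmn
  calc (m : ℝ) ^ (-4 / 3 : ℝ) * (a n / (n : ℝ) ^ (2 / 3 : ℝ))
      = a n * ((m : ℝ) ^ (-4 / 3 : ℝ) / (n : ℝ) ^ (2 / 3 : ℝ)) := by ring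
    _ ≤ a n * (N ^ (1 / 3 : ℝ) / ((m : ℝ) ^ 2 * n)) := mul_le_mul_of_nonneg_left key (ha n)
    _ = N ^ (1 / 3 : ℝ) * (a n / ((m : ℝ) ^ 2 * n)) := by ring

lemma sum_sq_rpow_neg_two_thirds_mul_sqrt_le (a : ℕ → ℕ → ℝ) (ha : ∀ m n, 0 ≤ a m n)
    (M : ℕ) {N : ℝ} (hN : 0 ≤ N) :
    ∑ m ∈ Icc 1 M, ((m : ℝ) ^ (-2 / 3 : ℝ) *
        √(∑ n ∈ Icc 1 ⌊N / (m : ℝ) ^ 2⌋₊, a m n / (n : ℝ) ^ (2 / 3 : ℝ))) ^ 2 ≤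
      N ^ (1 / 3 : ℝ) * ∑ m ∈ Icc 1 ⌊N⌋₊, ∑ n ∈ Icc 1 ⌊N⌋₊,
        if (m : ℝ) ^ 2 * n ≤ N then a m n / ((m : ℝ) ^ 2 * n) else 0 := by
  calc _ = ∑ m ∈ Icc 1 M, (m : ℝ) ^ (-4 / 3 : ℝ) *
          ∑ n ∈ Icc 1 ⌊N / (m : ℝ) ^ 2⌋₊, a m n / (n : ℝ) ^ (2 / 3 : ℝ) := by
        refine sum_congr rfl fun m _ ↦ ?_
        rw [mul_pow, Real.sq_sqrt (sum_nonneg fun n _ ↦ div_nonneg (ha m n) (by positivity)),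
          ← Real.rpow_mul_natCast (by positivity)]
        norm_num
    _ ≤ ∑ m ∈ Icc 1 M, N ^ (1 / 3 : ℝ) *
          ∑ n ∈ Icc 1 ⌊N / (m : ℝ) ^ 2⌋₊, a m n / ((m : ℝ) ^ 2 * n) :=
        sum_le_sum fun m hm ↦
          rpow_neg_four_thirds_mul_sum_le (a m) (ha m) (mem_Icc.mp hm).1 N
    _ ≤ _ := by
        rw [← mul_sum]
        exact mul_le_mul_of_nonneg_left (sum_Icc_sum_Icc_floor_div_sq_le _
          (fun m n ↦ div_nonneg (ha m n) (by positivity)) M N) (by positivity)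

lemma rpow_one_third_mul_rpow_le_rpow_sq {N ε : ℝ} (hN : 1 ≤ N) (hε : 0 ≤ ε) :
    N ^ (1 / 3 : ℝ) * N ^ ε ≤ (N ^ (1 / 6 + ε)) ^ 2 := by
  rw [← Real.rpow_add (by linarith), ← Real.rpow_mul_natCast (by linarith)]
  exact Real.rpow_le_rpow_of_exponent_le hN (by push_cast; linarith)

lemma sqrt_le_sqrt_mul_of_le_mul_sq {t c y : ℝ} (hy : 0 ≤ y) (h : t ≤ c * y ^ 2) :
    √t ≤ √c * y :=
  calc √t ≤ √(c * y ^ 2) := Real.sqrt_le_sqrt h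
    _ = √c * y := by rw [Real.sqrt_mul' _ (by positivity), Real.sqrt_sq hy]

theorem n1_sum_lemma_general (lam : ℕ × ℕ → ℂ) (ε : ℝ) (hε : 0 < ε)
    (K₀ : ℝ) (hK₀ : 1 ≤ K₀)
    (hyp : ∀ n : ℝ, 1 ≤ n →
      (∑ n₁ ∈ Finset.Icc 1 ⌊n⌋₊, ∑ n₂ ∈ Finset.Icc 1 ⌊n⌋₊,
        if (n₁ : ℝ) ^ 2 * (n₂ : ℝ) ≤ n then
          ‖lam (n₂, n₁)‖ ^ 2 / ((n₁ : ℝ) ^ 2 * (n₂ : ℝ)) else 0) ≤ K₀ * n ^ ε) :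
    ∃ C : ℝ, 0 < C ∧ ∀ α : ℝ, 7 / 6 ≤ α → ∀ N₀ : ℝ, 2 ≤ N₀ → ∀ X : ℝ, 2 ≤ X →
      (∑ n₁ ∈ Finset.Icc 1 ⌊X⌋₊, (n₁ : ℝ) ^ (-α) *
        Real.sqrt (∑ n₂ ∈ Finset.Icc 1 ⌊N₀ / (n₁ : ℝ) ^ 2⌋₊,
          ‖lam (n₂, n₁)‖ ^ 2 / (n₂ : ℝ) ^ ((2 : ℝ) / 3))) ≤
        C * X ^ ε * N₀ ^ (1 / 6 + ε) := by
  have hK₀_pos : 0 < K₀ := by linarith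
  refine ⟨√(1 + 1 / ε) * √K₀, by positivity, fun α hα N₀ hN₀ X hX ↦ ?_⟩
  set S : ℕ → ℝ := fun m ↦ ∑ n ∈ Icc 1 ⌊N₀ / (m : ℝ) ^ 2⌋₊,
    ‖lam (n, m)‖ ^ 2 / (n : ℝ) ^ (2 / 3 : ℝ)
  have hsplit : ∀ m ∈ Icc 1 ⌊X⌋₊,
      (m : ℝ) ^ (-α) * √(S m) = (m : ℝ) ^ (2 / 3 - α) * ((m : ℝ) ^ (-2 / 3 : ℝ) * √(S m)) := by
    intro m hm
    rw [← mul_assoc, ← Real.rpow_add (by exact_mod_cast (mem_Icc.mp hm).1)]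
    ring_nf
  have hA : √(∑ m ∈ Icc 1 ⌊X⌋₊, ((m : ℝ) ^ (2 / 3 - α)) ^ 2) ≤ √(1 + 1 / ε) * X ^ ε := by
    refine sqrt_le_sqrt_mul_of_le_mul_sq (by positivity)
      ((sum_Icc_floor_rpow_sq_le (by linarith) hε (by linarith)).trans ?_)
    have hXε : 1 ≤ X ^ ε := Real.one_le_rpow (by linarith) hε.le
    gcongr
    nlinarith
  have hB : √(∑ m ∈ Icc 1 ⌊X⌋₊, ((m : ℝ) ^ (-2 / 3 : ℝ) * √(S m)) ^ 2) ≤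
      √K₀ * N₀ ^ (1 / 6 + ε) := by
    refine sqrt_le_sqrt_mul_of_le_mul_sq (by positivity) ?_
    calc _ ≤ N₀ ^ (1 / 3 : ℝ) * (K₀ * N₀ ^ ε) :=
          (sum_sq_rpow_neg_two_thirds_mul_sqrt_le (fun m n ↦ ‖lam (n, m)‖ ^ 2)
            (fun _ _ ↦ by positivity) _ (by linarith)).trans
          (by gcongr; exact hyp N₀ (by linarith))
      _ = K₀ * (N₀ ^ (1 / 3 : ℝ) * N₀ ^ ε) := by ring
      _ ≤ K₀ * (N₀ ^ (1 / 6 + ε)) ^ 2 := by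
          gcongr; exact rpow_one_third_mul_rpow_le_rpow_sq (by linarith) hε.le
  calc ∑ m ∈ Icc 1 ⌊X⌋₊, (m : ℝ) ^ (-α) * √(S m)
      = ∑ m ∈ Icc 1 ⌊X⌋₊, (m : ℝ) ^ (2 / 3 - α) * ((m : ℝ) ^ (-2 / 3 : ℝ) * √(S m)) :=
        sum_congr rfl hsplit
    _ ≤ _ := Real.sum_mul_le_sqrt_mul_sqrt _ _ _
    _ ≤ (√(1 + 1 / ε) * X ^ ε) * (√K₀ * N₀ ^ (1 / 6 + ε)) :=
        mul_le_mul hA hB (Real.sqrt_nonneg _) (by positivity)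
    _ = √(1 + 1 / ε) * √K₀ * X ^ ε * N₀ ^ (1 / 6 + ε) := by ring

/-- The `n₁`-sum lemma: assuming the Ramanujan bound on average for `λ`, the sum
`Σ_{n₁ ≤ X} n₁^{-α} (Σ_{n₂ ≤ N₀/n₁²} |λ(n₂,n₁)|²/n₂^{2/3})^{1/2}` is
`O(X^ε N₀^{1/6+ε})` uniformly for `α ≥ 7/6`. -/
theorem n1_sum_lemma (lam : ℕ × ℕ → ℂ) (ε : ℝ) (hε : 0 < ε) (hε' : ε < 1 / 3)
    (K₀ : ℝ) (hK₀ : 1 ≤ K₀)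
    (hyp : ∀ n : ℝ, 1 ≤ n →
      (∑ n₁ ∈ Finset.Icc 1 ⌊n⌋₊, ∑ n₂ ∈ Finset.Icc 1 ⌊n⌋₊,
        if (n₁ : ℝ) ^ 2 * (n₂ : ℝ) ≤ n then
          ‖lam (n₂, n₁)‖ ^ 2 / ((n₁ : ℝ) ^ 2 * (n₂ : ℝ)) else 0) ≤ K₀ * n ^ ε) :
    ∃ C : ℝ, 0 < C ∧ ∀ α : ℝ, 7 / 6 ≤ α → ∀ N₀ : ℝ, 2 ≤ N₀ → ∀ X : ℝ, 2 ≤ X →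
      (∑ n₁ ∈ Finset.Icc 1 ⌊X⌋₊, (n₁ : ℝ) ^ (-α) *
        Real.sqrt (∑ n₂ ∈ Finset.Icc 1 ⌊N₀ / (n₁ : ℝ) ^ 2⌋₊,
          ‖lam (n₂, n₁)‖ ^ 2 / (n₂ : ℝ) ^ ((2 : ℝ) / 3))) ≤
        C * X ^ ε * N₀ ^ (1 / 6 + ε) :=
  n1_sum_lemma_general lam ε hε K₀ hK₀ hyp
end
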